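/- arXiv:2511.17326 — 7 statements merged into one kernel-verified Lean document; each statement's English description precedes it below -/
import Mathlib

section
/- Let G be a d-regular graph whose normalized Laplacian L = I − A/d has k-th smallest eigenvalue λ_k ≤ 2ε. Let f_v ∈ R^k be the spectral embedding of vertex v given by the bottom k orthonormal eigenvectors (so (f_v)_i = ⟨x_i, 1_v⟩ for eigenvectors x_1,...,x_k). Then for every vertex v, ‖f_v − (1/d)·Σ_{w ∈ N(v)} f_w‖₂ ≤ 2ε·‖f_v‖₂. -/
open Finset Matrix

/-- Let `G` be a `d`-regular graph whose normalized Laplacian `L = I − A/d` has its bottom `k`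
eigenvalues bounded by `2ε` (with orthonormal eigenvectors `x 1, ..., x k`).  Let
`f v ∈ ℝ^k` be the spectral embedding of vertex `v`, i.e. `(f v) i = ⟨x i, 1_v⟩ = x i v`.
Then for every vertex `v`, `‖f v − (1/d)·∑_{w ∈ N(v)} f w‖₂ ≤ 2ε·‖f v‖₂`. -/
theorem spectral_embedding_close_to_neighbor_average
    {V : Type*} [Fintype V] [DecidableEq V]
    (G : SimpleGraph V) [DecidableRel G.Adj]
    (d : ℕ) (hd : 0 < d) (hreg : ∀ v, G.degree v = d)
    (k : ℕ) (ε : ℝ) (hε : 0 ≤ ε)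
    (x : Fin k → (V → ℝ)) (lam : Fin k → ℝ)
    (hortho : ∀ i j, x i ⬝ᵥ x j = if i = j then (1 : ℝ) else 0)
    (heig : ∀ i, ((1 : Matrix V V ℝ) - (d : ℝ)⁻¹ • G.adjMatrix ℝ).mulVec (x i) = lam i • x i)
    (hlam : ∀ i, 0 ≤ lam i ∧ lam i ≤ 2 * ε)
    (f : V → EuclideanSpace ℝ (Fin k))
    (hf : ∀ v i, f v i = x i v) :
    ∀ v, ‖f v - (d : ℝ)⁻¹ • ∑ w ∈ G.neighborFinset v, f w‖ ≤ 2 * ε * ‖f v‖ := by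
  intro v
  have hcomp : ∀ i, (f v - (d : ℝ)⁻¹ • ∑ w ∈ G.neighborFinset v, f w) i = lam i * f v i := by
    intro i
    have h := congrFun (heig i) v
    simp only [Matrix.sub_mulVec, Matrix.one_mulVec, Matrix.smul_mulVec,
      SimpleGraph.adjMatrix_mulVec_apply, Pi.sub_apply, Pi.smul_apply, smul_eq_mul] at h
    have hs : (∑ w ∈ G.neighborFinset v, f w) i = ∑ w ∈ G.neighborFinset v, f w i :=
      by rw [WithLp.ofLp_sum, Finset.sum_apply]
    simp only [PiLp.sub_apply, PiLp.smul_apply, smul_eq_mul, hs, hf]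
    linarith [h]
  have hnorm := EuclideanSpace.norm_eq (f v - (d : ℝ)⁻¹ • ∑ w ∈ G.neighborFinset v, f w)
  rw [hnorm, EuclideanSpace.norm_eq (f v)]
  rw [show (2 * ε) * Real.sqrt (∑ i, ‖f v i‖ ^ 2)
      = Real.sqrt ((2 * ε) ^ 2 * ∑ i, ‖f v i‖ ^ 2) by
    rw [Real.sqrt_mul (by positivity), Real.sqrt_sq (by linarith)]]
  apply Real.sqrt_le_sqrt
  rw [Finset.mul_sum]
  apply Finset.sum_le_sum
  intro i _
  rw [hcomp i]
  have h1 := (hlam i).1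
  have h2 := (hlam i).2
  have : ‖lam i * f v i‖ ≤ (2 * ε) * ‖f v i‖ := by
    rw [norm_mul, Real.norm_eq_abs, abs_of_nonneg h1]
    exact mul_le_mul_of_nonneg_right h2 (norm_nonneg _)
  calc ‖lam i * f v i‖ ^ 2 ≤ ((2 * ε) * ‖f v i‖) ^ 2 := by
        exact pow_le_pow_left₀ (norm_nonneg _) this 2
    _ = (2 * ε) ^ 2 * ‖f v i‖ ^ 2 := by ring
end

section
/- Let G = (V,E,w) be a weighted graph and 0 < ψ ≤ 1. Let C ⊆ V and let S ⊊ C maximize vol(S) among subsets of C satisfying vol(S) ≤ vol(C)/2 and w(S, C∖S)/vol(S) ≤ ψ. If vol(S) ≤ r·vol(C) for some r ≤ 1/3, then the induced graph G{C∖S} (with self-loops added preserving degrees) has conductance at least ψ·(1−3r)/(1−r). -/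
/-!
Let `A ⊆ C ∖ S` be the lighter side of a cut of `C ∖ S`, with other side `B`, and suppose
`w(A, B) < φ · vol A` where `φ = ψ(1 − 3r)/(1 − r) ≤ ψ`. If `vol S + vol A ≤ vol C / 2`, then
`S ∪ A` is a sparse cut of `C` of larger volume than `S`. Otherwise `B`, whose complement in `C` is
`S ∪ A`, has volume at most `vol C / 2` and boundary at most `w(S, C ∖ S) + w(A, B) ≤ ψ vol S + φ vol A`,
which is `≤ ψ vol B` because `vol S ≤ r vol C`. So `B` is a sparse cut and maximality gives
`vol B ≤ vol S ≤ r vol C`, whereas `vol B ≥ (1 − r) vol C / 2`: this forces `r ≥ 1/3`, where `φ ≤ 0`.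
-/

open Finset

/-- Weighted degree of a vertex. -/
noncomputable def wdeg {V : Type*} [Fintype V] (w : V → V → ℝ) (u : V) : ℝ := ∑ v, w u v

/-- Weighted volume of a vertex set. -/
noncomputable def wvol {V : Type*} [Fintype V] (w : V → V → ℝ) (A : Finset V) : ℝ :=
  ∑ u ∈ A, wdeg w u

/-- Total weight of edges between two vertex sets. -/
noncomputable def wcut {V : Type*} [Fintype V] (w : V → V → ℝ) (A B : Finset V) : ℝ :=
  ∑ u ∈ A, ∑ v ∈ B, w u v

section Cuts

variable {V : Type*} [Fintype V] {w : V → V → ℝ}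

lemma wvol_nonneg (hnn : ∀ u v, 0 ≤ w u v) (A : Finset V) : 0 ≤ wvol w A :=
  sum_nonneg fun u _ => sum_nonneg fun v _ => hnn u v

lemma wcut_nonneg (hnn : ∀ u v, 0 ≤ w u v) (A B : Finset V) : 0 ≤ wcut w A B :=
  sum_nonneg fun u _ => sum_nonneg fun v _ => hnn u v

lemma wcut_comm (hsymm : ∀ u v, w u v = w v u) (A B : Finset V) : wcut w A B = wcut w B A := by
  rw [wcut, sum_comm]
  exact sum_congr rfl fun v _ => sum_congr rfl fun u _ => hsymm u v

lemma wcut_mono_right (hnn : ∀ u v, 0 ≤ w u v) (A : Finset V) {B B' : Finset V} (h : B ⊆ B') :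
    wcut w A B ≤ wcut w A B' :=
  sum_le_sum fun u _ => sum_le_sum_of_subset_of_nonneg h fun v _ _ => hnn u v

variable [DecidableEq V]

lemma wvol_union {A B : Finset V} (h : Disjoint A B) : wvol w (A ∪ B) = wvol w A + wvol w B :=
  sum_union h

lemma wvol_sdiff_add {A B : Finset V} (h : B ⊆ A) : wvol w (A \ B) + wvol w B = wvol w A :=
  sum_sdiff h

lemma wcut_union_left {A B : Finset V} (h : Disjoint A B) (X : Finset V) :
    wcut w (A ∪ B) X = wcut w A X + wcut w B X :=
  sum_union h

lemma wcut_union_right (X : Finset V) {A B : Finset V} (h : Disjoint A B) :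
    wcut w X (A ∪ B) = wcut w X A + wcut w X B := by
  simp only [wcut, ← sum_add_distrib, sum_union h]

end Cuts

def IsSparseCut {V : Type*} [Fintype V] [DecidableEq V] (w : V → V → ℝ) (ψ : ℝ)
    (C S : Finset V) : Prop :=
  S ⊆ C ∧ wvol w S ≤ wvol w C / 2 ∧ wcut w S (C \ S) ≤ ψ * wvol w S

section SparseCut

variable {V : Type*} [Fintype V] [DecidableEq V] {w : V → V → ℝ} {ψ : ℝ} {C S A : Finset V}

lemma isSparseCut_union (hnn : ∀ u v, 0 ≤ w u v) (hSC : S ⊆ C)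
    (hS : wcut w S (C \ S) ≤ ψ * wvol w S) (hA : A ⊆ C \ S)
    (hvol : wvol w S + wvol w A ≤ wvol w C / 2)
    (hcut : wcut w A ((C \ S) \ A) ≤ ψ * wvol w A) :
    IsSparseCut w ψ C (S ∪ A) := by
  have hSA : Disjoint S A := disjoint_sdiff.mono_right hA
  refine ⟨union_subset hSC (hA.trans sdiff_subset), by rwa [wvol_union hSA], ?_⟩
  rw [wcut_union_left hSA, wvol_union hSA, ← sup_eq_union, ← sdiff_sdiff_left]
  have := wcut_mono_right hnn S (sdiff_subset : (C \ S) \ A ⊆ C \ S)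
  linarith

lemma isSparseCut_sdiff_sdiff (hsymm : ∀ u v, w u v = w v u) (hnn : ∀ u v, 0 ≤ w u v)
    (hSC : S ⊆ C) (hS : wcut w S (C \ S) ≤ ψ * wvol w S) (hA : A ⊆ C \ S)
    (hvol : wvol w C / 2 ≤ wvol w S + wvol w A)
    (hcut : wcut w A ((C \ S) \ A) + ψ * wvol w S ≤ ψ * wvol w ((C \ S) \ A)) :
    IsSparseCut w ψ C ((C \ S) \ A) := by
  have hSA : Disjoint S A := disjoint_sdiff.mono_right hA
  have hcompl : C \ ((C \ S) \ A) = S ∪ A := by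
    rw [sdiff_sdiff_left, sup_eq_union,
      Finset.sdiff_sdiff_eq_self (union_subset hSC (hA.trans sdiff_subset))]
  have hvolB : wvol w ((C \ S) \ A) + wvol w A + wvol w S = wvol w C := by
    rw [wvol_sdiff_add hA, wvol_sdiff_add hSC]
  refine ⟨sdiff_subset.trans sdiff_subset, by linarith, ?_⟩
  rw [hcompl, wcut_union_right _ hSA, wcut_comm hsymm _ S, wcut_comm hsymm _ A]
  have := wcut_mono_right hnn S (sdiff_subset : (C \ S) \ A ⊆ C \ S)
  linarith

lemma mul_wvol_le_wcut_sdiff (hsymm : ∀ u v, w u v = w v u) (hnn : ∀ u v, 0 ≤ w u v)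
    (hSC : S ⊆ C) (hS : wcut w S (C \ S) ≤ ψ * wvol w S)
    (hmax : ∀ S', IsSparseCut w ψ C S' → wvol w S' ≤ wvol w S)
    {r : ℝ} (hr0 : 0 ≤ r) (hr : r ≤ 1 / 3) (hrS : wvol w S ≤ r * wvol w C)
    (hA : A ⊆ C \ S) (hAB : wvol w A ≤ wvol w ((C \ S) \ A)) :
    ψ * (1 - 3 * r) / (1 - r) * wvol w A ≤ wcut w A ((C \ S) \ A) := by
  by_contra! hlt
  have hvolC : wvol w ((C \ S) \ A) + wvol w A + wvol w S = wvol w C := by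
    rw [wvol_sdiff_add hA, wvol_sdiff_add hSC]
  have h1r : 0 < 1 - r := by linarith
  have hcut0 := wcut_nonneg hnn A ((C \ S) \ A)
  rw [div_mul_eq_mul_div, lt_div_iff₀ h1r] at hlt
  obtain ⟨hψ, h3r, ha⟩ : 0 < ψ ∧ 0 < 1 - 3 * r ∧ 0 < wvol w A := by
    have hpos := (mul_nonneg hcut0 h1r.le).trans_lt hlt
    rw [mul_assoc] at hpos
    have h3r : 0 ≤ 1 - 3 * r := by linarith
    have ha := wvol_nonneg hnn A
    have hψ := pos_of_mul_pos_left hpos (mul_nonneg h3r ha)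
    have hpos' := pos_of_mul_pos_right hpos hψ.le
    exact ⟨hψ, pos_of_mul_pos_left hpos' ha, pos_of_mul_pos_right hpos' h3r⟩
  rcases le_total (wvol w S + wvol w A) (wvol w C / 2) with hsmall | hlarge
  · have hcut : wcut w A ((C \ S) \ A) ≤ ψ * wvol w A := by nlinarith
    have := hmax _ (isSparseCut_union hnn hSC hS hA hsmall hcut)
    rw [wvol_union (disjoint_sdiff.mono_right hA)] at this
    linarith
  · have hcut : wcut w A ((C \ S) \ A) + ψ * wvol w S ≤ ψ * wvol w ((C \ S) \ A) := by
      have : (1 - 3 * r) * wvol w A ≤ (1 - r) * (wvol w ((C \ S) \ A) - wvol w S) := by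
        nlinarith [mul_nonneg h3r.le (sub_nonneg.2 hAB), mul_nonneg hr0 (sub_nonneg.2 hAB)]
      nlinarith [mul_le_mul_of_nonneg_left this hψ.le]
    have := hmax _ (isSparseCut_sdiff_sdiff hsymm hnn hSC hS hA hlarge hcut)
    nlinarith

end SparseCut

theorem remaining_core_expands_general {V : Type*} [Fintype V] [DecidableEq V]
    (w : V → V → ℝ) (hsymm : ∀ u v, w u v = w v u) (hnn : ∀ u v, 0 ≤ w u v)
    (ψ : ℝ)
    (C S : Finset V) (hSC : S ⊂ C)
    (hS2 : wcut w S (C \ S) ≤ ψ * wvol w S)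
    (hmax : ∀ S' ⊆ C, wvol w S' ≤ wvol w C / 2 → wcut w S' (C \ S') ≤ ψ * wvol w S' →
      wvol w S' ≤ wvol w S)
    (r : ℝ) (hr0 : 0 ≤ r) (hr : r ≤ 1 / 3) (hrS : wvol w S ≤ r * wvol w C) :
    ∀ T ⊆ C \ S, T.Nonempty → T ≠ C \ S →
      ψ * (1 - 3 * r) / (1 - r) * min (wvol w T) (wvol w ((C \ S) \ T))
        ≤ wcut w T ((C \ S) \ T) := by
  intro T hT _ _
  have hmax' : ∀ S', IsSparseCut w ψ C S' → wvol w S' ≤ wvol w S :=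
    fun S' ⟨hS'C, hvol, hcut⟩ => hmax S' hS'C hvol hcut
  have key := fun {A} => mul_wvol_le_wcut_sdiff (A := A) hsymm hnn hSC.subset hS2 hmax' hr0 hr hrS
  rcases le_total (wvol w T) (wvol w ((C \ S) \ T)) with hle | hle
  · rw [min_eq_left hle]
    exact key hT hle
  · rw [min_eq_right hle, wcut_comm hsymm]
    have hcompl : (C \ S) \ ((C \ S) \ T) = T := Finset.sdiff_sdiff_eq_self hT
    simpa only [hcompl] using key (A := (C \ S) \ T) sdiff_subset (by rwa [hcompl])

/-- (Spielman–Teng.)  Let `G = (V,E,w)` be a weighted graph and `0 < ψ ≤ 1`.  Let `C ⊆ V` and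
let `S ⊊ C` maximize `vol S` among subsets of `C` satisfying `vol S ≤ vol C / 2` and
`w(S, C∖S) ≤ ψ · vol S`.  If `vol S ≤ r · vol C` for some `r ≤ 1/3`, then the induced graph
`G{C∖S}` (degrees preserved, as in `G`) has conductance at least `ψ·(1−3r)/(1−r)`:
for every nonempty proper subset `T` of `C∖S`,
`w(T, (C∖S)∖T) ≥ ψ(1−3r)/(1−r) · min(vol T, vol((C∖S)∖T))`. -/
theorem remaining_core_expands {V : Type*} [Fintype V] [DecidableEq V]
    (w : V → V → ℝ) (hsymm : ∀ u v, w u v = w v u) (hnn : ∀ u v, 0 ≤ w u v)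
    (ψ : ℝ) (hψ0 : 0 < ψ) (hψ1 : ψ ≤ 1)
    (C S : Finset V) (hSC : S ⊂ C)
    (hS1 : wvol w S ≤ wvol w C / 2)
    (hS2 : wcut w S (C \ S) ≤ ψ * wvol w S)
    (hmax : ∀ S' ⊆ C, wvol w S' ≤ wvol w C / 2 → wcut w S' (C \ S') ≤ ψ * wvol w S' →
      wvol w S' ≤ wvol w S)
    (r : ℝ) (hr0 : 0 ≤ r) (hr : r ≤ 1 / 3) (hrS : wvol w S ≤ r * wvol w C) :
    ∀ T ⊆ C \ S, T.Nonempty → T ≠ C \ S →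
      ψ * (1 - 3 * r) / (1 - r) * min (wvol w T) (wvol w ((C \ S) \ T))
        ≤ wcut w T ((C \ S) \ T) :=
  remaining_core_expands_general w hsymm hnn ψ C S hSC hS2 hmax r hr0 hr hrS
end

section
/- Let H = (V, E') be a d-regular multigraph (self-loops allowed, each contributing 1 to the degree), let ψ ∈ (0,1), and let ∅ ≠ S ⊆ V satisfy |E'(Q, V∖Q)| ≥ ψ·d·|Q| for every Q ⊆ S. Then for every integer t ≥ 1, the probability that a t-step lazy random walk started at a uniformly random vertex of S stays inside S for all t steps is at most 2·exp(−ψ²t/36). -/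
open Finset Matrix


/-- Spectral bound: if a real symmetric matrix has quadratic form between `0` and `lam·‖y‖²`,
then `x ⬝ B^t x ≤ lam^t ‖x‖²`. -/
private lemma quad_pow_le {n : Type*} [Fintype n] [DecidableEq n]
    (B : Matrix n n ℝ) (hB : B.IsHermitian) (lam : ℝ) (hlam : 0 ≤ lam)
    (h0 : ∀ y : n → ℝ, 0 ≤ y ⬝ᵥ B *ᵥ y)
    (h1 : ∀ y : n → ℝ, y ⬝ᵥ B *ᵥ y ≤ lam * (y ⬝ᵥ y))
    (x : n → ℝ) (t : ℕ) : x ⬝ᵥ (B ^ t) *ᵥ x ≤ lam ^ t * (x ⬝ᵥ x) := by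
  set U : Matrix n n ℝ := (hB.eigenvectorUnitary : Matrix n n ℝ) with hUdef
  have hU1 : U * star U = 1 := (Matrix.mem_unitaryGroup_iff).mp hB.eigenvectorUnitary.2
  have hU1' : star U * U = 1 := (Matrix.mem_unitaryGroup_iff').mp hB.eigenvectorUnitary.2
  have hev : ∀ i, 0 ≤ hB.eigenvalues i ∧ hB.eigenvalues i ≤ lam := by
    intro i
    have hveq := hB.eigenvalues_eq i
    set v : n → ℝ := ⇑(hB.eigenvectorBasis i) with hvdef
    have hsv : star v = v := by funext j; simp
    have hvv : v ⬝ᵥ v = 1 := by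
      have hn := hB.eigenvectorBasis.orthonormal.1 i
      have h2 : (inner ℝ (hB.eigenvectorBasis i) (hB.eigenvectorBasis i) : ℝ) = 1 := by
        rw [real_inner_self_eq_norm_mul_norm, hn]; norm_num
      rw [PiLp.inner_apply] at h2
      simpa [dotProduct, hvdef, ← sq] using h2
    have hveq' : hB.eigenvalues i = v ⬝ᵥ B *ᵥ v := by
      rw [hveq, hsv]; simp
    constructor
    · rw [hveq']; exact h0 v
    · rw [hveq']; calc v ⬝ᵥ B *ᵥ v ≤ lam * (v ⬝ᵥ v) := h1 v
        _ = lam := by rw [hvv, mul_one]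
  have key : B ^ t = U * Matrix.diagonal (fun i => hB.eigenvalues i ^ t) * star U := by
    have hspec : B = U * Matrix.diagonal hB.eigenvalues * star U := by
      have := hB.spectral_theorem
      rwa [RCLike.ofReal_real_eq_id, Function.id_comp] at this
    induction t with
    | zero =>
      simp only [pow_zero]
      rw [show (Matrix.diagonal (fun _ : n => (1:ℝ))) = (1 : Matrix n n ℝ) from
        Matrix.diagonal_one, mul_one, hU1]
    | succ k ih =>
      rw [pow_succ, ih]
      rw [congrArg (fun Z => (U * Matrix.diagonal (fun i => hB.eigenvalues i ^ k)) *
        star U * Z) hspec]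
      simp only [mul_assoc]
      rw [show star U * (U * (Matrix.diagonal hB.eigenvalues * star U))
          = Matrix.diagonal hB.eigenvalues * star U by rw [← mul_assoc, hU1', one_mul]]
      rw [show Matrix.diagonal (fun i => hB.eigenvalues i ^ k) *
            (Matrix.diagonal hB.eigenvalues * star U)
          = Matrix.diagonal (fun i => hB.eigenvalues i ^ (k + 1)) * star U by
        rw [← mul_assoc, Matrix.diagonal_mul_diagonal]
        simp [pow_succ]]
  set w : n → ℝ := (star U) *ᵥ x with hwdef
  have hxU : x ᵥ* U = w := by
    funext i
    simp only [hwdef, Matrix.vecMul, Matrix.mulVec, dotProduct, Matrix.star_apply,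
      star_trivial]
    exact Finset.sum_congr rfl fun u _ => mul_comm _ _
  have hform : ∀ g : n → ℝ, x ⬝ᵥ (U * Matrix.diagonal g * star U) *ᵥ x
      = ∑ i, g i * (w i) ^ 2 := by
    intro g
    rw [← Matrix.mulVec_mulVec, ← Matrix.mulVec_mulVec, Matrix.dotProduct_mulVec, hxU]
    simp only [dotProduct]
    refine Finset.sum_congr rfl fun i _ => ?_
    rw [Matrix.mulVec_diagonal]
    ring
  have hww : ∑ i, (w i) ^ 2 = x ⬝ᵥ x := by
    have h2 : w ⬝ᵥ w = x ⬝ᵥ x := by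
      nth_rewrite 2 [hwdef]
      rw [Matrix.dotProduct_mulVec, hxU.symm, Matrix.vecMul_vecMul, hU1, Matrix.vecMul_one]
    rw [← h2]
    exact Finset.sum_congr rfl fun i _ => (sq (w i)).symm ▸ (pow_two (w i)).symm ▸ rfl
  rw [key, hform]
  calc ∑ i, hB.eigenvalues i ^ t * (w i) ^ 2
      ≤ ∑ i, lam ^ t * (w i) ^ 2 := by
        refine Finset.sum_le_sum fun i _ => ?_
        exact mul_le_mul_of_nonneg_right (pow_le_pow_left₀ (hev i).1 (hev i).2 t) (sq_nonneg _)
    _ = lam ^ t * (x ⬝ᵥ x) := by rw [← Finset.mul_sum, hww]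


private lemma levelset_bound {V : Type*} [Fintype V] [DecidableEq V]
    (A : Matrix V V ℝ) (hsym : A.IsSymm) (ψd : ℝ) (S : Finset V)
    (hexp : ∀ Q ⊆ S, ψd * Q.card ≤ ∑ u ∈ Q, ∑ v ∈ Qᶜ, A u v) :
    ∀ (f : V → ℝ), (∀ u, 0 ≤ f u) → (∀ u, u ∉ S → f u = 0) →
      2 * ψd * ∑ u, f u ≤ ∑ u, ∑ v, A u v * |f u - f v| := by
  suffices H : ∀ (N : ℕ) (f : V → ℝ), (univ.filter fun u => 0 < f u).card ≤ N →
      (∀ u, 0 ≤ f u) → (∀ u, u ∉ S → f u = 0) →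
      2 * ψd * ∑ u, f u ≤ ∑ u, ∑ v, A u v * |f u - f v| by
    intro f h1 h2; exact H _ f le_rfl h1 h2
  intro N
  induction N with
  | zero =>
    intro f hcard h1 h2
    have hf0 : ∀ u, f u = 0 := by
      intro u
      by_contra h
      have hu : u ∈ univ.filter fun u => 0 < f u := by
        simp [lt_of_le_of_ne (h1 u) (Ne.symm h)]
      have := Finset.card_eq_zero.mp (Nat.le_zero.mp hcard)
      simp [this] at hu
    simp [hf0]
  | succ N ih =>
    intro f hcard h1 h2
    set Q := univ.filter (fun u => 0 < f u) with hQdef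
    rcases Q.eq_empty_or_nonempty with hQe | hQne
    · have hf0 : ∀ u, f u = 0 := by
        intro u
        by_contra h
        have hu : u ∈ Q := by
          simp [hQdef, lt_of_le_of_ne (h1 u) (Ne.symm h)]
        simp [hQe] at hu
      simp [hf0]
    · obtain ⟨u₀, hu₀Q, hmin⟩ := Q.exists_min_image f hQne
      set m := f u₀ with hmdef
      have hm_pos : 0 < m := (Finset.mem_filter.mp hu₀Q).2
      set g : V → ℝ := fun u => if 0 < f u then f u - m else 0 with hgdef
      have hgnn : ∀ u, 0 ≤ g u := by
        intro u
        simp only [hgdef]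
        split_ifs with h
        · have hu : u ∈ Q := by simp [hQdef, h]
          linarith [hmin u hu]
        · exact le_rfl
      have hfQ : ∀ u, u ∈ Q → f u = g u + m := by
        intro u hu
        have h : 0 < f u := (Finset.mem_filter.mp hu).2
        simp [hgdef, h]
      have hfnQ : ∀ u, u ∉ Q → f u = 0 := by
        intro u hu
        have h : ¬ 0 < f u := by simpa [hQdef] using hu
        linarith [h1 u]
      have hgnQ : ∀ u, u ∉ Q → g u = 0 := by
        intro u hu
        have h : ¬ 0 < f u := by simpa [hQdef] using hu
        simp [hgdef, h]
      have hgS : ∀ u, u ∉ S → g u = 0 := by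
        intro u hu
        have h := h2 u hu
        simp [hgdef, h]
      have hQS : Q ⊆ S := by
        intro u hu
        by_contra h
        have h3 := h2 u h
        have h4 := (Finset.mem_filter.mp hu).2
        linarith
      have hfu₀ : 0 < f u₀ := by rw [← hmdef]; exact hm_pos
      have hgu0 : g u₀ = 0 := by
        simp only [hgdef]
        rw [if_pos hfu₀, ← hmdef, sub_self]
      have hcard' : (univ.filter fun u => 0 < g u).card ≤ N := by
        have hsub : (univ.filter fun u => 0 < g u) ⊆ Q.erase u₀ := by
          intro u hu
          have hgu : 0 < g u := (Finset.mem_filter.mp hu).2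
          have hfu : 0 < f u := by
            by_contra h
            rw [hgnQ u (by simp [hQdef, h])] at hgu
            exact lt_irrefl 0 hgu
          have huQ : u ∈ Q := by simp [hQdef, hfu]
          refine Finset.mem_erase.mpr ⟨?_, huQ⟩
          intro he
          rw [he, hgu0] at hgu
          exact lt_irrefl 0 hgu
        have := Finset.card_le_card hsub
        have h5 := Finset.card_erase_of_mem hu₀Q
        omega
      set c : V → ℝ := fun u => if u ∈ Q then (1:ℝ) else 0 with hcdef
      have habs : ∀ u v, |f u - f v| = |g u - g v| + m * |c u - c v| := by
        intro u v
        by_cases hu : u ∈ Q <;> by_cases hv : v ∈ Q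
        · rw [hfQ u hu, hfQ v hv]
          have e1 : g u + m - (g v + m) = g u - g v := by ring
          have e2 : c u - c v = 0 := by simp [hcdef, hu, hv]
          rw [e1, e2, abs_zero, mul_zero, add_zero]
        · rw [hfQ u hu, hfnQ v hv, hgnQ v hv]
          have e2 : c u - c v = 1 := by simp [hcdef, hu, hv]
          rw [e2, abs_one, mul_one, sub_zero, sub_zero,
            abs_of_nonneg (by linarith [hgnn u, hm_pos.le] : (0:ℝ) ≤ g u + m),
            abs_of_nonneg (hgnn u)]
        · rw [hfnQ u hu, hfQ v hv, hgnQ u hu]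
          have e2 : c u - c v = -1 := by simp [hcdef, hu, hv]
          rw [e2, abs_neg, abs_one, mul_one, zero_sub, zero_sub, abs_neg, abs_neg,
            abs_of_nonneg (by linarith [hgnn v, hm_pos.le] : (0:ℝ) ≤ g v + m),
            abs_of_nonneg (hgnn v)]
        · rw [hfnQ u hu, hfnQ v hv, hgnQ u hu, hgnQ v hv]
          simp [hcdef, hu, hv]
      have hfsum : ∑ u, f u = ∑ u, g u + m * Q.card := by
        have hpt : ∀ u, f u = g u + m * c u := by
          intro u
          by_cases hu : u ∈ Q
          · rw [hfQ u hu]; simp [hcdef, hu]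
          · rw [hfnQ u hu, hgnQ u hu]; simp [hcdef, hu]
        rw [Finset.sum_congr rfl (fun u _ => hpt u), Finset.sum_add_distrib, ← Finset.mul_sum]
        have hc : ∑ u, c u = Q.card := by
          simp only [hcdef]
          rw [Finset.sum_boole]
          congr 1
          simp [Finset.filter_univ_mem]
        rw [hc]
      have hcutsum : ∑ u, ∑ v, A u v * |c u - c v| = 2 * ∑ u ∈ Q, ∑ v ∈ Qᶜ, A u v := by
        have inner1 : ∀ u ∈ Q, ∑ v, A u v * |c u - c v| = ∑ v ∈ Qᶜ, A u v := by
          intro u hu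
          rw [← Finset.sum_add_sum_compl Q (fun v => A u v * |c u - c v|)]
          have z1 : ∑ v ∈ Q, A u v * |c u - c v| = 0 :=
            Finset.sum_eq_zero (fun v hv => by simp [hcdef, hu, hv])
          rw [z1, zero_add]
          refine Finset.sum_congr rfl fun v hv => ?_
          have hv' : v ∉ Q := Finset.mem_compl.mp hv
          simp [hcdef, hu, hv']
        have inner2 : ∀ u ∈ Qᶜ, ∑ v, A u v * |c u - c v| = ∑ v ∈ Q, A u v := by
          intro u hu
          have hu' : u ∉ Q := Finset.mem_compl.mp hu
          rw [← Finset.sum_add_sum_compl Q (fun v => A u v * |c u - c v|)]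
          have z1 : ∑ v ∈ Qᶜ, A u v * |c u - c v| = 0 :=
            Finset.sum_eq_zero (fun v hv => by
              have hv' : v ∉ Q := Finset.mem_compl.mp hv
              simp [hcdef, hu', hv'])
          rw [z1, add_zero]
          refine Finset.sum_congr rfl fun v hv => ?_
          simp [hcdef, hu', hv]
        have swap : ∑ u ∈ Qᶜ, ∑ v ∈ Q, A u v = ∑ u ∈ Q, ∑ v ∈ Qᶜ, A u v := by
          refine Finset.sum_comm.trans ?_
          exact Finset.sum_congr rfl fun v _ => Finset.sum_congr rfl fun u _ => hsym.apply v u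
        calc ∑ u, ∑ v, A u v * |c u - c v|
            = (∑ u ∈ Q, ∑ v, A u v * |c u - c v|)
              + ∑ u ∈ Qᶜ, ∑ v, A u v * |c u - c v| :=
              (Finset.sum_add_sum_compl Q _).symm
          _ = (∑ u ∈ Q, ∑ v ∈ Qᶜ, A u v) + ∑ u ∈ Qᶜ, ∑ v ∈ Q, A u v := by
              exact congrArg₂ (· + ·) (Finset.sum_congr rfl inner1)
                (Finset.sum_congr rfl inner2)
          _ = 2 * ∑ u ∈ Q, ∑ v ∈ Qᶜ, A u v := by rw [swap]; ring
      have hT : ∑ u, ∑ v, A u v * |f u - f v|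
          = (∑ u, ∑ v, A u v * |g u - g v|) + m * ∑ u, ∑ v, A u v * |c u - c v| := by
        rw [Finset.mul_sum, ← Finset.sum_add_distrib]
        refine Finset.sum_congr rfl fun u _ => ?_
        rw [Finset.mul_sum, ← Finset.sum_add_distrib]
        refine Finset.sum_congr rfl fun v _ => ?_
        rw [habs u v]; ring
      have hgind := ih g hcard' hgnn hgS
      have hQcut := hexp Q hQS
      rw [hfsum, hT, hcutsum]
      have hkey := mul_le_mul_of_nonneg_left hQcut hm_pos.le
      linarith

private lemma dirichlet_bound {V : Type*} [Fintype V] [DecidableEq V]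
    (A : Matrix V V ℝ) (hsym : A.IsSymm) (hnn : ∀ u v, 0 ≤ A u v)
    (d : ℝ) (hd : 0 < d) (hreg : ∀ u, ∑ v, A u v = d)
    (ψ : ℝ) (hψ0 : 0 < ψ) (S : Finset V)
    (hexp : ∀ Q ⊆ S, ψ * d * Q.card ≤ ∑ u ∈ Q, ∑ v ∈ Qᶜ, A u v)
    (z : V → ℝ) (hz : ∀ u, u ∉ S → z u = 0) :
    ψ ^ 2 * d * (∑ u, z u * z u) ≤ ∑ u, ∑ v, A u v * (z u - z v) ^ 2 := by
  have hreg' : ∀ v, ∑ u, A u v = d := by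
    intro v
    rw [← hreg v]
    exact Finset.sum_congr rfl fun u _ => hsym.apply v u
  set N := ∑ u, z u * z u with hNdef
  set Δ := ∑ u, ∑ v, A u v * (z u - z v) ^ 2 with hΔdef
  set Sg := ∑ u, ∑ v, A u v * (z u + z v) ^ 2 with hSgdef
  set T := ∑ u, ∑ v, A u v * |z u * z u - z v * z v| with hTdef
  have hN0 : 0 ≤ N := Finset.sum_nonneg fun u _ => mul_self_nonneg _
  have hΔ0 : 0 ≤ Δ := Finset.sum_nonneg fun u _ => Finset.sum_nonneg fun v _ =>
    mul_nonneg (hnn u v) (sq_nonneg _)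
  have hSg0 : 0 ≤ Sg := Finset.sum_nonneg fun u _ => Finset.sum_nonneg fun v _ =>
    mul_nonneg (hnn u v) (sq_nonneg _)
  have hXX : ∑ u, ∑ v, A u v * (z u * z u) = d * N := by
    calc ∑ u, ∑ v, A u v * (z u * z u)
        = ∑ u, d * (z u * z u) := by
          refine Finset.sum_congr rfl fun u _ => ?_
          rw [← Finset.sum_mul, hreg u]
      _ = d * N := (Finset.mul_sum _ _ _).symm
  have hYY : ∑ u, ∑ v, A u v * (z v * z v) = d * N := by
    calc ∑ u, ∑ v, A u v * (z v * z v)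
        = ∑ v, ∑ u, A u v * (z v * z v) := Finset.sum_comm
      _ = ∑ v, d * (z v * z v) := by
          refine Finset.sum_congr rfl fun v _ => ?_
          rw [← Finset.sum_mul, hreg' v]
      _ = d * N := (Finset.mul_sum _ _ _).symm
  have hDS : Δ + Sg = 4 * (d * N) := by
    calc Δ + Sg
        = ∑ u, ((∑ v, A u v * (z u - z v) ^ 2) + ∑ v, A u v * (z u + z v) ^ 2) :=
          Finset.sum_add_distrib.symm
      _ = ∑ u, ∑ v, (2 * (A u v * (z u * z u)) + 2 * (A u v * (z v * z v))) := by
          refine Finset.sum_congr rfl fun u _ => ?_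
          rw [← Finset.sum_add_distrib]
          exact Finset.sum_congr rfl fun v _ => by ring
      _ = ∑ u, (2 * (∑ v, A u v * (z u * z u)) + 2 * ∑ v, A u v * (z v * z v)) := by
          refine Finset.sum_congr rfl fun u _ => ?_
          rw [Finset.sum_add_distrib, ← Finset.mul_sum, ← Finset.mul_sum]
      _ = 2 * (∑ u, ∑ v, A u v * (z u * z u)) + 2 * ∑ u, ∑ v, A u v * (z v * z v) := by
          rw [Finset.sum_add_distrib, ← Finset.mul_sum, ← Finset.mul_sum]
      _ = 4 * (d * N) := by rw [hXX, hYY]; ring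
  have hCS : T ^ 2 ≤ Δ * Sg := by
    have key := Finset.sum_mul_sq_le_sq_mul_sq (univ : Finset (V × V))
      (fun p => Real.sqrt (A p.1 p.2) * |z p.1 - z p.2|)
      (fun p => Real.sqrt (A p.1 p.2) * |z p.1 + z p.2|)
    have e1 : ∑ p : V × V, (Real.sqrt (A p.1 p.2) * |z p.1 - z p.2|) *
        (Real.sqrt (A p.1 p.2) * |z p.1 + z p.2|) = T := by
      rw [hTdef, Fintype.sum_prod_type]
      refine Finset.sum_congr rfl fun u _ => Finset.sum_congr rfl fun v _ => ?_
      dsimp only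
      rw [show (Real.sqrt (A u v) * |z u - z v|) *
          (Real.sqrt (A u v) * |z u + z v|)
          = (Real.sqrt (A u v) * Real.sqrt (A u v)) *
            (|z u - z v| * |z u + z v|) from by ring,
        Real.mul_self_sqrt (hnn u v), ← abs_mul,
        show (z u - z v) * (z u + z v) = z u * z u - z v * z v from by ring]
    have e2 : ∑ p : V × V, (Real.sqrt (A p.1 p.2) * |z p.1 - z p.2|) ^ 2 = Δ := by
      rw [hΔdef, Fintype.sum_prod_type]
      refine Finset.sum_congr rfl fun u _ => Finset.sum_congr rfl fun v _ => ?_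
      dsimp only
      rw [mul_pow, Real.sq_sqrt (hnn u v), sq_abs]
    have e3 : ∑ p : V × V, (Real.sqrt (A p.1 p.2) * |z p.1 + z p.2|) ^ 2 = Sg := by
      rw [hSgdef, Fintype.sum_prod_type]
      refine Finset.sum_congr rfl fun u _ => Finset.sum_congr rfl fun v _ => ?_
      dsimp only
      rw [mul_pow, Real.sq_sqrt (hnn u v), sq_abs]
    rw [e1, e2, e3] at key
    exact key
  have hTlow : 2 * (ψ * d) * (∑ u, z u * z u) ≤
      ∑ u, ∑ v, A u v * |z u * z u - z v * z v| :=
    levelset_bound A hsym (ψ * d) S hexp (fun u => z u * z u)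
      (fun u => mul_self_nonneg _) (fun u hu => by show z u * z u = 0; rw [hz u hu, mul_zero])
  rw [← hNdef, ← hTdef] at hTlow
  rcases eq_or_lt_of_le hN0 with hN | hN
  · rw [← hN, mul_zero]
    exact hΔ0
  · have h2ψdN : 0 ≤ 2 * (ψ * d) * N :=
      mul_nonneg (mul_nonneg (by norm_num) (mul_nonneg hψ0.le hd.le)) hN0
    nlinarith [hCS, hDS, hSg0, hΔ0, mul_pos hd hN, mul_pos hψ0 hd,
      mul_self_le_mul_self h2ψdN hTlow, sq_nonneg Δ, sq_nonneg (Δ - d * N)]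


private lemma quad_expand {V : Type*} [Fintype V] [DecidableEq V]
    (A : Matrix V V ℝ) (hsym : A.IsSymm) (d : ℝ) (hreg : ∀ u, ∑ v, A u v = d)
    (z : V → ℝ) :
    (∑ u, ∑ v, A u v * (z u - z v) ^ 2)
      = 2 * (d * (∑ u, z u * z u)) - 2 * (z ⬝ᵥ A *ᵥ z) ∧
    (∑ u, ∑ v, A u v * (z u + z v) ^ 2)
      = 2 * (d * (∑ u, z u * z u)) + 2 * (z ⬝ᵥ A *ᵥ z) := by
  have hreg' : ∀ v, ∑ u, A u v = d := by
    intro v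
    rw [← hreg v]
    exact Finset.sum_congr rfl fun u _ => hsym.apply v u
  have hXX : ∑ u, ∑ v, A u v * (z u * z u) = d * ∑ u, z u * z u := by
    calc ∑ u, ∑ v, A u v * (z u * z u)
        = ∑ u, d * (z u * z u) := by
          refine Finset.sum_congr rfl fun u _ => ?_
          rw [← Finset.sum_mul, hreg u]
      _ = d * ∑ u, z u * z u := (Finset.mul_sum _ _ _).symm
  have hYY : ∑ u, ∑ v, A u v * (z v * z v) = d * ∑ u, z u * z u := by
    calc ∑ u, ∑ v, A u v * (z v * z v)
        = ∑ v, ∑ u, A u v * (z v * z v) := Finset.sum_comm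
      _ = ∑ v, d * (z v * z v) := by
          refine Finset.sum_congr rfl fun v _ => ?_
          rw [← Finset.sum_mul, hreg' v]
      _ = d * ∑ u, z u * z u := (Finset.mul_sum _ _ _).symm
  have hzAz : z ⬝ᵥ A *ᵥ z = ∑ u, ∑ v, z u * (A u v * z v) := by
    simp only [dotProduct, Matrix.mulVec, Finset.mul_sum]
  constructor
  · calc ∑ u, ∑ v, A u v * (z u - z v) ^ 2
        = ∑ u, ((∑ v, A u v * (z u * z u)) + (∑ v, A u v * (z v * z v))
            - 2 * ∑ v, z u * (A u v * z v)) := by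
          refine Finset.sum_congr rfl fun u _ => ?_
          rw [Finset.mul_sum, ← Finset.sum_add_distrib, ← Finset.sum_sub_distrib]
          exact Finset.sum_congr rfl fun v _ => by ring
      _ = (∑ u, ∑ v, A u v * (z u * z u)) + (∑ u, ∑ v, A u v * (z v * z v))
            - 2 * ∑ u, ∑ v, z u * (A u v * z v) := by
          rw [Finset.sum_sub_distrib, Finset.sum_add_distrib, ← Finset.mul_sum]
      _ = 2 * (d * (∑ u, z u * z u)) - 2 * (z ⬝ᵥ A *ᵥ z) := by
          rw [hXX, hYY, ← hzAz]; ring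
  · calc ∑ u, ∑ v, A u v * (z u + z v) ^ 2
        = ∑ u, ((∑ v, A u v * (z u * z u)) + (∑ v, A u v * (z v * z v))
            + 2 * ∑ v, z u * (A u v * z v)) := by
          refine Finset.sum_congr rfl fun u _ => ?_
          rw [Finset.mul_sum, ← Finset.sum_add_distrib, ← Finset.sum_add_distrib]
          exact Finset.sum_congr rfl fun v _ => by ring
      _ = (∑ u, ∑ v, A u v * (z u * z u)) + (∑ u, ∑ v, A u v * (z v * z v))
            + 2 * ∑ u, ∑ v, z u * (A u v * z v) := by
          rw [Finset.sum_add_distrib, Finset.sum_add_distrib, ← Finset.mul_sum]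
      _ = 2 * (d * (∑ u, z u * z u)) + 2 * (z ⬝ᵥ A *ᵥ z) := by
          rw [hXX, hYY, ← hzAz]; ring

/-- Let `H = (V, E')` be a `d`-regular multigraph (self-loops allowed, each contributing 1
to the degree; adjacency matrix `A`, so that `∑_v A u v = d` for all `u`), let `ψ ∈ (0,1)`,
and let `∅ ≠ S ⊆ V` satisfy `|E'(Q, V∖Q)| ≥ ψ·d·|Q|` for every `Q ⊆ S`.  Then for every
`t ≥ 1`, the probability that a `t`-step lazy random walk (transition matrix
`M = (1/2)I + (1/(2d))A`) started at a uniformly random vertex of `S` stays inside `S` for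
all `t` steps — namely `1_S^T (P M)^t 1_S / |S|` where `P = diag(1_S)` — is at most
`2·exp(−ψ²t/36)`. -/
theorem lazy_walk_escapes_expanding_set
    {V : Type*} [Fintype V] [DecidableEq V]
    (d : ℕ) (hd : 0 < d)
    (A : Matrix V V ℝ) (hsym : A.IsSymm) (hnn : ∀ u v, 0 ≤ A u v)
    (hreg : ∀ u, ∑ v, A u v = d)
    (ψ : ℝ) (hψ0 : 0 < ψ) (hψ1 : ψ < 1)
    (S : Finset V) (hS : S.Nonempty)
    (hexp : ∀ Q ⊆ S, ψ * d * Q.card ≤ ∑ u ∈ Q, ∑ v ∈ Qᶜ, A u v)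
    (t : ℕ) (ht : 1 ≤ t) :
    let M : Matrix V V ℝ := (1 / 2 : ℝ) • (1 : Matrix V V ℝ) + (1 / (2 * d) : ℝ) • A
    let P : Matrix V V ℝ := Matrix.diagonal (fun v => if v ∈ S then (1 : ℝ) else 0)
    let indS : V → ℝ := fun v => if v ∈ S then (1 : ℝ) else 0
    (indS ⬝ᵥ ((P * M) ^ t).mulVec indS) / S.card ≤ 2 * Real.exp (-ψ ^ 2 * t / 36) := by
  intro M P indS
  have hM_eq : M = (1 / 2 : ℝ) • (1 : Matrix V V ℝ) + (1 / (2 * (d:ℝ)) : ℝ) • A := rfl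
  have hP_eq : P = Matrix.diagonal (fun v => if v ∈ S then (1 : ℝ) else 0) := rfl
  have hind : indS = fun v => if v ∈ S then (1 : ℝ) else 0 := rfl
  have dpos : (0:ℝ) < (d:ℝ) := by exact_mod_cast hd
  have hlam0 : (0:ℝ) ≤ 1 - ψ ^ 2 / 4 := by nlinarith
  -- symmetry facts
  have hMsym : M.IsSymm := by
    rw [hM_eq]
    exact (Matrix.isSymm_one.smul _).add (hsym.smul _)
  have hPsym : P.IsSymm := by rw [hP_eq]; exact Matrix.isSymm_diagonal _
  have hBsym : (P * M * P).IsSymm := by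
    show (P * M * P)ᵀ = P * M * P
    rw [Matrix.transpose_mul, Matrix.transpose_mul, hPsym.eq, hMsym.eq, ← mul_assoc]
  have hBherm : (P * M * P).IsHermitian := by
    show (P * M * P)ᴴ = P * M * P
    rw [Matrix.conjTranspose_eq_transpose_of_trivial]
    exact hBsym
  -- quadratic form bounds for M on vectors supported in S
  have hMform : ∀ z : V → ℝ, (∀ u, u ∉ S → z u = 0) →
      0 ≤ z ⬝ᵥ M *ᵥ z ∧ z ⬝ᵥ M *ᵥ z ≤ (1 - ψ ^ 2 / 4) * (z ⬝ᵥ z) := by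
    intro z hzS
    have hMz : z ⬝ᵥ M *ᵥ z
        = (1 / 2) * (z ⬝ᵥ z) + (1 / (2 * (d:ℝ))) * (z ⬝ᵥ A *ᵥ z) := by
      rw [hM_eq, Matrix.add_mulVec, dotProduct_add, Matrix.smul_mulVec,
        Matrix.smul_mulVec, Matrix.one_mulVec, dotProduct_smul,
        dotProduct_smul]
      simp [smul_eq_mul]
    have hzz : z ⬝ᵥ z = ∑ u, z u * z u := rfl
    obtain ⟨hminus, hplus⟩ := quad_expand A hsym (d:ℝ) hreg z
    have hdir := dirichlet_bound A hsym hnn (d:ℝ) dpos hreg ψ hψ0 S hexp z hzS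
    have hSg0 : (0:ℝ) ≤ ∑ u, ∑ v, A u v * (z u + z v) ^ 2 :=
      Finset.sum_nonneg fun u _ => Finset.sum_nonneg fun v _ =>
        mul_nonneg (hnn u v) (sq_nonneg _)
    have hMz4 : 4 * (d:ℝ) * (z ⬝ᵥ M *ᵥ z)
        = 2 * ((d:ℝ) * (z ⬝ᵥ z)) + 2 * (z ⬝ᵥ A *ᵥ z) := by
      rw [hMz]
      field_simp
      ring
    rw [hzz] at hMz4
    constructor
    · have h4 : 0 ≤ 4 * (d:ℝ) * (z ⬝ᵥ M *ᵥ z) := by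
        rw [hMz4]
        linarith [hplus, hSg0]
      nlinarith [dpos]
    · have h1 : 4 * (d:ℝ) * (z ⬝ᵥ M *ᵥ z)
          ≤ 4 * (d:ℝ) * ((1 - ψ ^ 2 / 4) * (z ⬝ᵥ z)) := by
        rw [hzz]
        nlinarith [hdir, hminus, hMz4]
      exact le_of_mul_le_mul_left h1 (by positivity)
  -- quadratic form bounds for B = P*M*P
  have hform0 : ∀ y : V → ℝ, 0 ≤ y ⬝ᵥ (P * M * P) *ᵥ y := by
    intro y
    have hPy : P *ᵥ y = fun u => if u ∈ S then y u else 0 := by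
      funext u
      rw [hP_eq, Matrix.mulVec_diagonal]
      by_cases h : u ∈ S <;> simp [h]
    have hyP : y ᵥ* P = fun u => if u ∈ S then y u else 0 := by
      funext u
      rw [hP_eq, Matrix.vecMul_diagonal]
      by_cases h : u ∈ S <;> simp [h]
    have hq : y ⬝ᵥ (P * M * P) *ᵥ y
        = (fun u => if u ∈ S then y u else 0) ⬝ᵥ M *ᵥ (fun u => if u ∈ S then y u else 0) := by
      rw [← Matrix.mulVec_mulVec, ← Matrix.mulVec_mulVec, Matrix.dotProduct_mulVec, hyP, hPy]
    rw [hq]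
    exact (hMform _ (fun u hu => by simp [hu])).1
  have hform1 : ∀ y : V → ℝ,
      y ⬝ᵥ (P * M * P) *ᵥ y ≤ (1 - ψ ^ 2 / 4) * (y ⬝ᵥ y) := by
    intro y
    have hPy : P *ᵥ y = fun u => if u ∈ S then y u else 0 := by
      funext u
      rw [hP_eq, Matrix.mulVec_diagonal]
      by_cases h : u ∈ S <;> simp [h]
    have hyP : y ᵥ* P = fun u => if u ∈ S then y u else 0 := by
      funext u
      rw [hP_eq, Matrix.vecMul_diagonal]
      by_cases h : u ∈ S <;> simp [h]
    have hq : y ⬝ᵥ (P * M * P) *ᵥ y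
        = (fun u => if u ∈ S then y u else 0) ⬝ᵥ M *ᵥ (fun u => if u ∈ S then y u else 0) := by
      rw [← Matrix.mulVec_mulVec, ← Matrix.mulVec_mulVec, Matrix.dotProduct_mulVec, hyP, hPy]
    have hzy : ((fun u => if u ∈ S then y u else 0) ⬝ᵥ (fun u => if u ∈ S then y u else 0))
        ≤ y ⬝ᵥ y := by
      refine Finset.sum_le_sum fun u _ => ?_
      by_cases h : u ∈ S <;> simp [h, mul_self_nonneg (y u)]
    rw [hq]
    calc (fun u => if u ∈ S then y u else 0) ⬝ᵥ M *ᵥ (fun u => if u ∈ S then y u else 0)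
        ≤ (1 - ψ ^ 2 / 4) * ((fun u => if u ∈ S then y u else 0) ⬝ᵥ
            (fun u => if u ∈ S then y u else 0)) :=
          (hMform _ (fun u hu => by simp [hu])).2
      _ ≤ (1 - ψ ^ 2 / 4) * (y ⬝ᵥ y) := by
          exact mul_le_mul_of_nonneg_left hzy hlam0
  -- spectral bound
  have hmain := quad_pow_le (P * M * P) hBherm (1 - ψ ^ 2 / 4) hlam0 hform0 hform1 indS t
  -- identify (P*M)^t with B^t on indS
  have hPP : P * P = P := by
    have hfun : (fun u => (if u ∈ S then (1:ℝ) else 0) * (if u ∈ S then (1:ℝ) else 0))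
        = (fun v => if v ∈ S then (1:ℝ) else 0) := by
      funext u
      by_cases h : u ∈ S <;> simp [h]
    rw [hP_eq, Matrix.diagonal_mul_diagonal, hfun]
  have hBt : ∀ k : ℕ, 1 ≤ k → (P * M * P) ^ k = (P * M) ^ k * P := by
    intro k hk
    induction k with
    | zero => omega
    | succ n ihn =>
      by_cases hn : n = 0
      · subst hn
        rw [pow_one, pow_one]
      · have hn1 : 1 ≤ n := Nat.one_le_iff_ne_zero.mpr hn
        rw [pow_succ, ihn hn1, pow_succ]
        simp only [mul_assoc]
        rw [show P * (P * (M * P)) = (P * P) * (M * P) from (mul_assoc _ _ _).symm, hPP]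
  have hPx : P *ᵥ indS = indS := by
    funext u
    rw [hP_eq, hind, Matrix.mulVec_diagonal]
    by_cases h : u ∈ S <;> simp [h]
  have hvec : ((P * M) ^ t) *ᵥ indS = ((P * M * P) ^ t) *ᵥ indS := by
    rw [hBt t ht, ← Matrix.mulVec_mulVec, hPx]
  have hxx : indS ⬝ᵥ indS = (S.card : ℝ) := by
    rw [hind]
    calc ∑ u, (if u ∈ S then (1:ℝ) else 0) * (if u ∈ S then (1:ℝ) else 0)
        = ∑ u, (if u ∈ S then (1:ℝ) else 0) :=
          Finset.sum_congr rfl fun u _ => by by_cases h : u ∈ S <;> simp [h]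
      _ = (S.card : ℝ) := by
          rw [Finset.sum_boole, Finset.filter_univ_mem]
  have hgoal1 : indS ⬝ᵥ ((P * M) ^ t) *ᵥ indS ≤ (1 - ψ ^ 2 / 4) ^ t * (S.card : ℝ) := by
    rw [hvec]
    calc indS ⬝ᵥ ((P * M * P) ^ t) *ᵥ indS
        ≤ (1 - ψ ^ 2 / 4) ^ t * (indS ⬝ᵥ indS) := hmain
      _ = (1 - ψ ^ 2 / 4) ^ t * (S.card : ℝ) := by rw [hxx]
  have hcard_pos : (0:ℝ) < (S.card : ℝ) := by exact_mod_cast Finset.card_pos.mpr hS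
  have h2 : (indS ⬝ᵥ ((P * M) ^ t).mulVec indS) / (S.card : ℝ) ≤ (1 - ψ ^ 2 / 4) ^ t := by
    rw [div_le_iff₀ hcard_pos]
    exact hgoal1
  refine h2.trans ?_
  have hlam_le : (1 - ψ ^ 2 / 4) ≤ Real.exp (-(ψ ^ 2 / 4)) := by
    linarith [Real.add_one_le_exp (-(ψ ^ 2 / 4))]
  have hp : (1 - ψ ^ 2 / 4) ^ t ≤ Real.exp (-(ψ ^ 2 / 4)) ^ t :=
    pow_le_pow_left₀ hlam0 hlam_le t
  have he : Real.exp (-(ψ ^ 2 / 4)) ^ t = Real.exp ((t : ℝ) * (-(ψ ^ 2 / 4))) :=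
    (Real.exp_nat_mul _ t).symm
  have hψ2t : (0:ℝ) ≤ ψ ^ 2 * (t : ℝ) := by positivity
  have hexp_mono : Real.exp ((t : ℝ) * (-(ψ ^ 2 / 4))) ≤ Real.exp (-ψ ^ 2 * t / 36) :=
    Real.exp_le_exp.mpr (by nlinarith)
  have hfin : Real.exp (-ψ ^ 2 * t / 36) ≤ 2 * Real.exp (-ψ ^ 2 * t / 36) := by
    linarith [Real.exp_pos (-ψ ^ 2 * (t:ℝ) / 36)]
  calc (1 - ψ ^ 2 / 4) ^ t ≤ Real.exp (-(ψ ^ 2 / 4)) ^ t := hp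
    _ = Real.exp ((t : ℝ) * (-(ψ ^ 2 / 4))) := he
    _ ≤ Real.exp (-ψ ^ 2 * t / 36) := hexp_mono
    _ ≤ 2 * Real.exp (-ψ ^ 2 * t / 36) := hfin
end

section
/- Let d ≥ 3 and let H₁ = (V,E₁,ℓ₁), H₂ = (V,E₂,ℓ₂) be d-regular graphs with self-loops such that E₁ ⊆ E₂ and E₂∖E₁ ⊆ E(S, V∖S) for some S ⊆ V. Then for every t ≥ 1, Pr[a t-step lazy random walk in H₁ started uniformly in S stays in S for all t steps] ≤ Pr[a t-step lazy random walk in H₂ started uniformly in S stays in S for all t steps] + t·|E₂∖E₁|/(2d|S|). -/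
/-!
Let `P = diag(1_S)` and `Bᵢ = P Mᵢ P`; as `P² = P`, the staying probability is
`1_S ⬝ Bᵢ^t 1_S / |S|`. On `S × S` the adjacency matrices differ only on the diagonal: by
`d`-regularity, a vertex `u ∈ S` that loses `k` cut edges in `H₁` gains `k` self-loops. Hence
`B₁ = B₂ + D` with `D ≥ 0` diagonal of trace `|E₂∖E₁| / 2d`. Both `Bᵢ` preserve the cube
`[0,1]^V` (`B₁` also acting on the left, being symmetric), so in the hybrid argument
`x ⬝ B₁^(k+1) y = (x B₁) ⬝ B₁^k y ≤ (x B₁) ⬝ B₂^k y + k tr D` each of the `t` steps costs at most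
`tr D`.
-/

open Finset Matrix

theorem pow_mul_eq_of_mul_self {R : Type*} [Monoid R] {P : R} (hP : P * P = P) (M : R) (n : ℕ) :
    (P * M) ^ n * P = (P * M * P) ^ n * P := by
  induction n with
  | zero => simp
  | succ n ih =>
    calc (P * M) ^ (n + 1) * P = (P * M) ^ n * P * (M * P) := by
          simp only [pow_succ, mul_assoc]
      _ = (P * M * P) ^ n * P * (M * P) := by rw [ih]
      _ = (P * M * P) ^ (n + 1) * P := by
          simp only [pow_succ, mul_assoc, hP]

section Matrix

variable {V : Type*} [Fintype V]

theorem mulVec_mem_Icc {B : Matrix V V ℝ} (hB : ∀ u v, 0 ≤ B u v) (hrow : ∀ u, ∑ v, B u v ≤ 1)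
    {x : V → ℝ} (hx : x ∈ Set.Icc 0 1) : B *ᵥ x ∈ Set.Icc 0 1 := by
  refine ⟨fun u ↦ sum_nonneg fun v _ ↦ mul_nonneg (hB u v) (hx.1 v), fun u ↦ ?_⟩
  calc (B *ᵥ x) u = ∑ v, B u v * x v := rfl
    _ ≤ ∑ v, B u v := sum_le_sum fun v _ ↦ mul_le_of_le_one_right (hB u v) (hx.2 v)
    _ ≤ 1 := hrow u

variable [DecidableEq V]

theorem dotProduct_diagonal_mulVec_le {δ : V → ℝ} (hδ : 0 ≤ δ) {x y : V → ℝ}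
    (hx : x ∈ Set.Icc 0 1) (hy : y ∈ Set.Icc 0 1) : x ⬝ᵥ diagonal δ *ᵥ y ≤ ∑ u, δ u := by
  simp only [dotProduct, mulVec_diagonal]
  refine sum_le_sum fun u _ ↦ ?_
  have hxy : x u * y u ≤ 1 := mul_le_one₀ (hx.2 u) (hy.1 u) (hy.2 u)
  calc x u * (δ u * y u) = δ u * (x u * y u) := by ring
    _ ≤ δ u := mul_le_of_le_one_right (hδ u) hxy

theorem pow_mulVec_eq_of_mul_self {P : Matrix V V ℝ} (hP : P * P = P) (M : Matrix V V ℝ)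
    (n : ℕ) {x : V → ℝ} (hx : P *ᵥ x = x) : (P * M) ^ n *ᵥ x = (P * M * P) ^ n *ᵥ x := by
  rw [← hx, mulVec_mulVec, mulVec_mulVec, pow_mul_eq_of_mul_self hP]

theorem dotProduct_pow_mulVec_le {K : Set (V → ℝ)} {B₁ B₂ : Matrix V V ℝ} {c : ℝ}
    (h₁ : ∀ x ∈ K, x ᵥ* B₁ ∈ K) (h₂ : ∀ y ∈ K, B₂ *ᵥ y ∈ K)
    (hc : ∀ x ∈ K, ∀ y ∈ K, x ⬝ᵥ B₁ *ᵥ y ≤ x ⬝ᵥ B₂ *ᵥ y + c)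
    (n : ℕ) {x y : V → ℝ} (hx : x ∈ K) (hy : y ∈ K) :
    x ⬝ᵥ (B₁ ^ n) *ᵥ y ≤ x ⬝ᵥ (B₂ ^ n) *ᵥ y + n * c := by
  have hpow₂ : ∀ n : ℕ, B₂ ^ n *ᵥ y ∈ K := by
    intro n
    induction n with
    | zero => simpa using hy
    | succ n ih => simpa [pow_succ', ← mulVec_mulVec] using h₂ _ ih
  induction n generalizing x with
  | zero => simp
  | succ n ih =>
    calc x ⬝ᵥ (B₁ ^ (n + 1)) *ᵥ y = x ᵥ* B₁ ⬝ᵥ (B₁ ^ n) *ᵥ y := by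
          rw [pow_succ', ← mulVec_mulVec, dotProduct_mulVec]
      _ ≤ x ᵥ* B₁ ⬝ᵥ (B₂ ^ n) *ᵥ y + n * c := ih (h₁ x hx)
      _ = x ⬝ᵥ B₁ *ᵥ (B₂ ^ n *ᵥ y) + n * c := by rw [← dotProduct_mulVec]
      _ ≤ x ⬝ᵥ B₂ *ᵥ (B₂ ^ n *ᵥ y) + c + n * c := by gcongr; exact hc x hx _ (hpow₂ n)
      _ = x ⬝ᵥ (B₂ ^ (n + 1)) *ᵥ y + (n + 1 : ℕ) * c := by
          rw [pow_succ', ← mulVec_mulVec]; push_cast; ring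

end Matrix

section LazyWalk

variable {V : Type*} [DecidableEq V] {d : ℕ} {A : Matrix V V ℝ}

noncomputable def lazyWalk (d : ℕ) (A : Matrix V V ℝ) : Matrix V V ℝ :=
  (1 / 2 : ℝ) • (1 : Matrix V V ℝ) + (1 / (2 * d) : ℝ) • A

theorem lazyWalk_nonneg (hA : ∀ u v, 0 ≤ A u v) (u v : V) : 0 ≤ lazyWalk d A u v := by
  have h1 : 0 ≤ (1 : Matrix V V ℝ) u v := by rw [one_apply]; split_ifs <;> norm_num
  have h2 := hA u v
  simp only [lazyWalk, Matrix.add_apply, Matrix.smul_apply, smul_eq_mul]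
  positivity

theorem Matrix.IsSymm.lazyWalk (hA : A.IsSymm) : (lazyWalk d A).IsSymm :=
  (isSymm_one.smul _).add (hA.smul _)

/-- Only `≤`: for `d = 0` the row sums are `1/2`, as `1 / (2 * 0) = 0`. -/
theorem sum_lazyWalk_le_one [Fintype V] (hA : ∀ u, ∑ v, A u v = d) (u : V) :
    ∑ v, lazyWalk d A u v ≤ 1 := by
  have hd : (1 / (2 * d) : ℝ) * d = 1 / 2 * (d / d) := by ring
  simp only [lazyWalk, Matrix.add_apply, Matrix.smul_apply, smul_eq_mul, sum_add_distrib,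
    ← mul_sum, hA, one_apply, sum_ite_eq, mem_univ, if_true, hd]
  linarith [div_self_le_one (d : ℝ)]

end LazyWalk

section Indicator

variable {V : Type*} [DecidableEq V] (S : Finset V)

def indicatorVec : V → ℝ := fun v ↦ if v ∈ S then 1 else 0

noncomputable def diagIndicator : Matrix V V ℝ := diagonal (indicatorVec S)

theorem indicatorVec_mem_Icc : indicatorVec S ∈ Set.Icc 0 1 :=
  ⟨fun v ↦ by unfold indicatorVec; split_ifs <;> norm_num,
    fun v ↦ by unfold indicatorVec; split_ifs <;> norm_num⟩

variable [Fintype V]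

theorem diagIndicator_mul_self : diagIndicator S * diagIndicator S = diagIndicator S := by
  simp [diagIndicator, indicatorVec]

theorem diagIndicator_mulVec_indicatorVec :
    diagIndicator S *ᵥ indicatorVec S = indicatorVec S := by
  ext v
  simp [diagIndicator, indicatorVec, mulVec_diagonal]

theorem diagIndicator_mul_mul_apply (M : Matrix V V ℝ) (u v : V) :
    (diagIndicator S * M * diagIndicator S) u v = if u ∈ S ∧ v ∈ S then M u v else 0 := by
  simp only [diagIndicator, indicatorVec, mul_diagonal, diagonal_mul]
  by_cases hu : u ∈ S <;> by_cases hv : v ∈ S <;> simp [hu, hv]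

theorem Matrix.IsSymm.diagIndicator_mul_mul {M : Matrix V V ℝ} (hM : M.IsSymm) :
    (diagIndicator S * M * diagIndicator S).IsSymm := by
  rw [IsSymm.ext_iff]
  intro u v
  simp only [diagIndicator_mul_mul_apply, hM.apply u v, and_comm]

theorem diagIndicator_mul_mul_mulVec_mem_Icc {M : Matrix V V ℝ} (hM : ∀ u v, 0 ≤ M u v)
    (hrow : ∀ u, ∑ v, M u v ≤ 1) {x : V → ℝ} (hx : x ∈ Set.Icc 0 1) :
    (diagIndicator S * M * diagIndicator S) *ᵥ x ∈ Set.Icc 0 1 := by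
  refine mulVec_mem_Icc (fun u v ↦ ?_) (fun u ↦ (sum_le_sum fun v _ ↦ ?_).trans (hrow u)) hx
  all_goals rw [diagIndicator_mul_mul_apply]; split_ifs
  exacts [hM u v, le_rfl, le_rfl, hM u v]

end Indicator

section Subgraph

variable {V : Type*} {A₁ A₂ : Matrix V V ℝ} {S : Finset V}

theorem apply_eq_of_mem_of_mem
    (hcross : ∀ u v, u ≠ v → A₁ u v ≠ A₂ u v → (u ∈ S ∧ v ∉ S) ∨ (u ∉ S ∧ v ∈ S))
    {u v : V} (hu : u ∈ S) (hv : v ∈ S) (huv : u ≠ v) : A₁ u v = A₂ u v := by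
  by_contra h
  rcases hcross u v huv h with ⟨-, hv'⟩ | ⟨hu', -⟩
  exacts [hv' hv, hu' hu]

variable [Fintype V] [DecidableEq V]

theorem apply_self_eq_add_sum_compl {r : ℝ} (hreg₁ : ∀ u, ∑ v, A₁ u v = r)
    (hreg₂ : ∀ u, ∑ v, A₂ u v = r)
    (hcross : ∀ u v, u ≠ v → A₁ u v ≠ A₂ u v → (u ∈ S ∧ v ∉ S) ∨ (u ∉ S ∧ v ∈ S))
    {u : V} (hu : u ∈ S) : A₁ u u = A₂ u u + ∑ v ∈ Sᶜ, (A₂ u v - A₁ u v) := by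
  have hS : ∑ v ∈ S, (A₂ u v - A₁ u v) = A₂ u u - A₁ u u :=
    sum_eq_single_of_mem u hu fun v hv hvu ↦ by
      rw [apply_eq_of_mem_of_mem hcross hu hv hvu.symm, sub_self]
  have htotal : ∑ v, (A₂ u v - A₁ u v) = 0 := by rw [sum_sub_distrib, hreg₁, hreg₂, sub_self]
  rw [← sum_add_sum_compl S, hS] at htotal
  linarith

theorem diagIndicator_mul_lazyWalk_mul_eq_add_diagonal (d : ℕ)
    (hreg₁ : ∀ u, ∑ v, A₁ u v = d) (hreg₂ : ∀ u, ∑ v, A₂ u v = d)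
    (hcross : ∀ u v, u ≠ v → A₁ u v ≠ A₂ u v → (u ∈ S ∧ v ∉ S) ∨ (u ∉ S ∧ v ∈ S)) :
    diagIndicator S * lazyWalk d A₁ * diagIndicator S =
      diagIndicator S * lazyWalk d A₂ * diagIndicator S +
        diagonal fun u ↦ if u ∈ S then (∑ v ∈ Sᶜ, (A₂ u v - A₁ u v)) / (2 * d) else 0 := by
  ext u v
  rw [Matrix.add_apply, diagIndicator_mul_mul_apply, diagIndicator_mul_mul_apply]
  by_cases huv : u = v
  · subst huv
    by_cases hu : u ∈ S
    · simp [hu, lazyWalk, apply_self_eq_add_sum_compl hreg₁ hreg₂ hcross hu]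
      ring
    · simp [hu]
  · rw [diagonal_apply_ne _ huv, add_zero]
    split_ifs with h
    · simp [lazyWalk, apply_eq_of_mem_of_mem hcross h.1 h.2 huv]
    · rfl

theorem dotProduct_diagIndicator_mul_lazyWalk_mul_le (d : ℕ)
    (hreg₁ : ∀ u, ∑ v, A₁ u v = d) (hreg₂ : ∀ u, ∑ v, A₂ u v = d)
    (hle : ∀ u v, u ≠ v → A₁ u v ≤ A₂ u v)
    (hcross : ∀ u v, u ≠ v → A₁ u v ≠ A₂ u v → (u ∈ S ∧ v ∉ S) ∨ (u ∉ S ∧ v ∈ S))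
    {x y : V → ℝ} (hx : x ∈ Set.Icc 0 1) (hy : y ∈ Set.Icc 0 1) :
    x ⬝ᵥ (diagIndicator S * lazyWalk d A₁ * diagIndicator S) *ᵥ y ≤
      x ⬝ᵥ (diagIndicator S * lazyWalk d A₂ * diagIndicator S) *ᵥ y +
        (∑ u ∈ S, ∑ v ∈ Sᶜ, (A₂ u v - A₁ u v)) / (2 * d) := by
  have hδ : 0 ≤ fun u ↦ if u ∈ S then (∑ v ∈ Sᶜ, (A₂ u v - A₁ u v)) / (2 * d) else 0 := by
    intro u
    dsimp only
    split_ifs with hu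
    · refine div_nonneg (sum_nonneg fun v hv ↦ sub_nonneg.2 (hle u v ?_)) (by positivity)
      rintro rfl
      exact mem_compl.1 hv hu
    · exact le_rfl
  rw [diagIndicator_mul_lazyWalk_mul_eq_add_diagonal d hreg₁ hreg₂ hcross, add_mulVec,
    dotProduct_add, sum_div]
  gcongr
  refine (dotProduct_diagonal_mulVec_le hδ hx hy).trans_eq ?_
  rw [← sum_filter, filter_mem_eq_inter, univ_inter]

theorem indicatorVec_dotProduct_pow_mulVec_le (d : ℕ) (hsym₁ : A₁.IsSymm)
    (hnn₁ : ∀ u v, 0 ≤ A₁ u v) (hnn₂ : ∀ u v, 0 ≤ A₂ u v)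
    (hreg₁ : ∀ u, ∑ v, A₁ u v = d) (hreg₂ : ∀ u, ∑ v, A₂ u v = d)
    (hle : ∀ u v, u ≠ v → A₁ u v ≤ A₂ u v)
    (hcross : ∀ u v, u ≠ v → A₁ u v ≠ A₂ u v → (u ∈ S ∧ v ∉ S) ∨ (u ∉ S ∧ v ∈ S)) (t : ℕ) :
    indicatorVec S ⬝ᵥ (diagIndicator S * lazyWalk d A₁) ^ t *ᵥ indicatorVec S ≤
      indicatorVec S ⬝ᵥ (diagIndicator S * lazyWalk d A₂) ^ t *ᵥ indicatorVec S +
        t * ((∑ u ∈ S, ∑ v ∈ Sᶜ, (A₂ u v - A₁ u v)) / (2 * d)) := by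
  have hP := diagIndicator_mul_self S
  have hPx := diagIndicator_mulVec_indicatorVec S
  have hmaps : ∀ {A : Matrix V V ℝ}, (∀ u v, 0 ≤ A u v) → (∀ u, ∑ v, A u v = d) →
      ∀ x ∈ Set.Icc 0 1, (diagIndicator S * lazyWalk d A * diagIndicator S) *ᵥ x ∈ Set.Icc 0 1 :=
    fun hnn hreg _ hx ↦
      diagIndicator_mul_mul_mulVec_mem_Icc S (lazyWalk_nonneg hnn) (sum_lazyWalk_le_one hreg) hx
  rw [pow_mulVec_eq_of_mul_self hP _ _ hPx, pow_mulVec_eq_of_mul_self hP _ _ hPx]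
  refine dotProduct_pow_mulVec_le (fun x hx ↦ ?_) (hmaps hnn₂ hreg₂)
    (fun x hx y hy ↦ dotProduct_diagIndicator_mul_lazyWalk_mul_le d hreg₁ hreg₂ hle hcross hx hy)
    t (indicatorVec_mem_Icc S) (indicatorVec_mem_Icc S)
  rw [← mulVec_transpose, (hsym₁.lazyWalk.diagIndicator_mul_mul S).eq]
  exact hmaps hnn₁ hreg₁ x hx

end Subgraph

theorem lazy_walk_subgraph_comparison_general
    {V : Type*} [Fintype V] [DecidableEq V]
    (d : ℕ)
    (A₁ A₂ : Matrix V V ℝ)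
    (hsym₁ : A₁.IsSymm)
    (hnn₁ : ∀ u v, 0 ≤ A₁ u v) (hnn₂ : ∀ u v, 0 ≤ A₂ u v)
    (hreg₁ : ∀ u, ∑ v, A₁ u v = d) (hreg₂ : ∀ u, ∑ v, A₂ u v = d)
    (S : Finset V)
    (hle : ∀ u v, u ≠ v → A₁ u v ≤ A₂ u v)
    (hcross : ∀ u v, u ≠ v → A₁ u v ≠ A₂ u v →
        (u ∈ S ∧ v ∉ S) ∨ (u ∉ S ∧ v ∈ S))
    (t : ℕ) :
    let M₁ : Matrix V V ℝ := (1 / 2 : ℝ) • (1 : Matrix V V ℝ) + (1 / (2 * d) : ℝ) • A₁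
    let M₂ : Matrix V V ℝ := (1 / 2 : ℝ) • (1 : Matrix V V ℝ) + (1 / (2 * d) : ℝ) • A₂
    let P : Matrix V V ℝ := Matrix.diagonal (fun v => if v ∈ S then (1 : ℝ) else 0)
    let indS : V → ℝ := fun v => if v ∈ S then (1 : ℝ) else 0
    let excess : ℝ := ∑ u ∈ S, ∑ v ∈ Sᶜ, (A₂ u v - A₁ u v)
    (indS ⬝ᵥ ((P * M₁) ^ t).mulVec indS) / S.card
      ≤ (indS ⬝ᵥ ((P * M₂) ^ t).mulVec indS) / S.card + t * excess / (2 * d * S.card) := by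
  intro M₁ M₂ P indS excess
  have hnormalize : ∀ a : ℝ, (a + t * (excess / (2 * d))) / S.card =
      a / S.card + t * excess / (2 * d * S.card) := fun a ↦ by ring
  exact (div_le_div_of_nonneg_right (indicatorVec_dotProduct_pow_mulVec_le d hsym₁ hnn₁ hnn₂
    hreg₁ hreg₂ hle hcross t) (Nat.cast_nonneg _)).trans_eq (hnormalize _)

/-- Let `d ≥ 3` and let `H₁ = (V,E₁,ℓ₁)`, `H₂ = (V,E₂,ℓ₂)` be `d`-regular graphs with
self-loops (adjacency matrices `A₁`, `A₂` with row sums `d`, diagonal entries counting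
self-loops) such that `E₁ ⊆ E₂` and `E₂∖E₁ ⊆ E(S, V∖S)` for some `S ⊆ V`.  Then for every
`t ≥ 1`, the probability that a `t`-step lazy random walk in `H₁` started uniformly in `S`
stays in `S` for all `t` steps is at most the corresponding probability for `H₂` plus
`t·|E₂∖E₁|/(2d|S|)`.  Here the staying probability for adjacency matrix `A` is
`1_S^T (P·M)^t 1_S / |S|` with `M = (1/2)I + (1/(2d))A`, `P = diag(1_S)`, and
`|E₂∖E₁| = ∑_{u∈S, v∉S} (A₂ u v − A₁ u v)`. -/
theorem lazy_walk_subgraph_comparison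
    {V : Type*} [Fintype V] [DecidableEq V]
    (d : ℕ) (hd : 3 ≤ d)
    (A₁ A₂ : Matrix V V ℝ)
    (hsym₁ : A₁.IsSymm) (hsym₂ : A₂.IsSymm)
    (hnn₁ : ∀ u v, 0 ≤ A₁ u v) (hnn₂ : ∀ u v, 0 ≤ A₂ u v)
    (hreg₁ : ∀ u, ∑ v, A₁ u v = d) (hreg₂ : ∀ u, ∑ v, A₂ u v = d)
    (S : Finset V) (hS : S.Nonempty)
    (hle : ∀ u v, u ≠ v → A₁ u v ≤ A₂ u v)
    (hcross : ∀ u v, u ≠ v → A₁ u v ≠ A₂ u v →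
        (u ∈ S ∧ v ∉ S) ∨ (u ∉ S ∧ v ∈ S))
    (t : ℕ) (ht : 1 ≤ t) :
    let M₁ : Matrix V V ℝ := (1 / 2 : ℝ) • (1 : Matrix V V ℝ) + (1 / (2 * d) : ℝ) • A₁
    let M₂ : Matrix V V ℝ := (1 / 2 : ℝ) • (1 : Matrix V V ℝ) + (1 / (2 * d) : ℝ) • A₂
    let P : Matrix V V ℝ := Matrix.diagonal (fun v => if v ∈ S then (1 : ℝ) else 0)
    let indS : V → ℝ := fun v => if v ∈ S then (1 : ℝ) else 0
    let excess : ℝ := ∑ u ∈ S, ∑ v ∈ Sᶜ, (A₂ u v - A₁ u v)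
    (indS ⬝ᵥ ((P * M₁) ^ t).mulVec indS) / S.card
      ≤ (indS ⬝ᵥ ((P * M₂) ^ t).mulVec indS) / S.card + t * excess / (2 * d * S.card) :=
  lazy_walk_subgraph_comparison_general d A₁ A₂ hsym₁ hnn₁ hnn₂ hreg₁ hreg₂ S hle hcross t
end

section
/- Let L be a real symmetric n×n matrix, P a real symmetric matrix with P·z = z for all z in the span S of eigenvectors of L corresponding to eigenvalues λ_{k+1} ≤ ... ≤ λ_n (the top n−k eigenvectors). If P(L_x − θI)P ⪰ 0 for a symmetric PSD-ordered matrix L_x, then the (k+1)-th smallest eigenvalue of L_x is at least θ. -/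
open Finset Matrix

private lemma vmv_mulVec {n : ℕ} (a b x : Fin n → ℝ) :
    Matrix.vecMulVec a b *ᵥ x = (b ⬝ᵥ x) • a := by
  funext i
  simp [Matrix.mulVec, Matrix.vecMulVec_apply, dotProduct, Finset.sum_mul,
    Finset.mul_sum, mul_comm, mul_left_comm, mul_assoc]

private lemma dp_sum_right {ι : Type*} {n : ℕ} (s : Finset ι) (x : Fin n → ℝ)
    (w : ι → (Fin n → ℝ)) : x ⬝ᵥ (∑ i ∈ s, w i) = ∑ i ∈ s, x ⬝ᵥ w i := by
  classical
  induction s using Finset.induction with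
  | empty => simp [dotProduct]
  | insert _ _ h ih => simp [Finset.sum_insert h, dotProduct_add, ih]

private lemma dp_sum_left {ι : Type*} {n : ℕ} (s : Finset ι) (x : Fin n → ℝ)
    (w : ι → (Fin n → ℝ)) : (∑ i ∈ s, w i) ⬝ᵥ x = ∑ i ∈ s, w i ⬝ᵥ x := by
  classical
  induction s using Finset.induction with
  | empty => simp [dotProduct]
  | insert _ _ h ih => simp [Finset.sum_insert h, add_dotProduct, ih]

private lemma mulVec_sum' {ι : Type*} {n : ℕ} (s : Finset ι)
    (A : Matrix (Fin n) (Fin n) ℝ) (w : ι → (Fin n → ℝ)) :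
    A *ᵥ (∑ i ∈ s, w i) = ∑ i ∈ s, A *ᵥ w i := by
  classical
  induction s using Finset.induction with
  | empty => simp [Matrix.mulVec_zero]
  | insert _ _ h ih => simp [Finset.sum_insert h, Matrix.mulVec_add, ih]

private lemma sum_mulVec' {ι : Type*} {n : ℕ} (s : Finset ι)
    (A : ι → Matrix (Fin n) (Fin n) ℝ) (x : Fin n → ℝ) :
    (∑ i ∈ s, A i) *ᵥ x = ∑ i ∈ s, (A i *ᵥ x) := by
  classical
  induction s using Finset.induction with
  | empty => simp [Matrix.zero_mulVec]
  | insert _ _ h ih => simp [Finset.sum_insert h, Matrix.add_mulVec, ih]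

/-- Let `L` be a real symmetric `n×n` matrix with orthonormal eigenvectors `v_1, ..., v_n`
and (sorted) eigenvalues `λ_1 ≤ ... ≤ λ_n`, and let
`P = I − ∑_{i=1}^k v_i v_iᵀ` be the orthogonal projection onto the span of the top `n−k`
eigenvectors (so `Pz = z` there).  If `P(L_x − θI)P ⪰ 0` for a symmetric matrix `L_x`, then
the `(k+1)`-th smallest eigenvalue of `L_x` is at least `θ`; equivalently, at most `k`
eigenvalues of `L_x` (with multiplicity) are below `θ`. -/
theorem lambda_k_plus_one_above_threshold
    {n : ℕ} (k : ℕ) (hk : k ≤ n)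
    (L Lx : Matrix (Fin n) (Fin n) ℝ)
    (hL : L.IsSymm) (hLx : Lx.IsHermitian)
    (v : Fin n → (Fin n → ℝ)) (lam : Fin n → ℝ)
    (hortho : ∀ i j, v i ⬝ᵥ v j = if i = j then (1 : ℝ) else 0)
    (heig : ∀ i, L.mulVec (v i) = lam i • v i)
    (hmono : Monotone lam)
    (θ : ℝ)
    (P : Matrix (Fin n) (Fin n) ℝ)
    (hP : P = 1 - ∑ i ∈ Finset.univ.filter (fun i : Fin n => (i : ℕ) < k),
        Matrix.vecMulVec (v i) (v i))
    (hpsd : (P * (Lx - θ • 1) * P).PosSemidef) :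
    (Finset.univ.filter (fun i => hLx.eigenvalues i < θ)).card ≤ k := by
  classical
  by_contra hcon
  push_neg at hcon
  set S := Finset.univ.filter (fun i => hLx.eigenvalues i < θ) with hS
  set m := S.card with hm
  let σ : Fin m → Fin n := fun i => ((S.orderIsoOfFin rfl i : S) : Fin n)
  have hσS : ∀ i, σ i ∈ S := fun i => (S.orderIsoOfFin rfl i).2
  have hσinj : Function.Injective σ := fun i j h =>
    (S.orderIsoOfFin rfl).injective (Subtype.ext h)
  let u : Fin n → (Fin n → ℝ) := fun i => ⇑(hLx.eigenvectorBasis i)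
  have hu : ∀ i j, u i ⬝ᵥ u j = if i = j then (1 : ℝ) else 0 := by
    intro i j
    have h1 := hLx.eigenvectorBasis.orthonormal
    rw [orthonormal_iff_ite] at h1
    have h2 := h1 i j
    simpa [PiLp.inner_apply, dotProduct, u, mul_comm] using h2
  have heigu : ∀ i, Lx *ᵥ u i = hLx.eigenvalues i • u i := fun i =>
    hLx.mulVec_eigenvectorBasis i
  let zf : (Fin m → ℝ) → (Fin n → ℝ) := fun c => ∑ i, c i • u (σ i)
  let f : (Fin m → ℝ) →ₗ[ℝ] (Fin k → ℝ) :=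
    { toFun := fun c j => v (Fin.castLE hk j) ⬝ᵥ zf c
      map_add' := by
        intro a b; funext j
        simp [zf, add_smul, Finset.sum_add_distrib, dotProduct_add]
      map_smul' := by
        intro r a; funext j
        show v _ ⬝ᵥ (∑ i, (r • a) i • u (σ i)) = r * (v _ ⬝ᵥ ∑ i, a i • u (σ i))
        rw [dp_sum_right, dp_sum_right, Finset.mul_sum]
        refine Finset.sum_congr rfl fun i _ => ?_
        simp [dotProduct_smul, mul_assoc] }
  have hker : LinearMap.ker f ≠ ⊥ := by
    apply LinearMap.ker_ne_bot_of_finrank_lt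
    simpa using hcon
  obtain ⟨c, hcker, hcne⟩ := (Submodule.ne_bot_iff _).mp hker
  have hfc : ∀ j : Fin k, v (Fin.castLE hk j) ⬝ᵥ zf c = 0 := by
    intro j
    have h := LinearMap.mem_ker.mp hcker
    exact congrFun h j
  set z : Fin n → ℝ := zf c with hz
  have hvz : ∀ i : Fin n, (i : ℕ) < k → v i ⬝ᵥ z = 0 := by
    intro i hi
    have h := hfc ⟨i, hi⟩
    have he : Fin.castLE hk ⟨(i : ℕ), hi⟩ = i := by ext; simp
    rwa [he] at h
  have hPz : P *ᵥ z = z := by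
    rw [hP, Matrix.sub_mulVec, Matrix.one_mulVec, sum_mulVec']
    have h0 : ∑ i ∈ Finset.univ.filter (fun i : Fin n => (i : ℕ) < k),
        (Matrix.vecMulVec (v i) (v i) *ᵥ z) = 0 := by
      refine Finset.sum_eq_zero fun i hi => ?_
      rw [vmv_mulVec, hvz i (Finset.mem_filter.mp hi).2, zero_smul]
    rw [h0, sub_zero]
  have hPsymm : Pᵀ = P := by
    rw [hP, Matrix.transpose_sub, Matrix.transpose_one, Matrix.transpose_sum]
    congr 1
    refine Finset.sum_congr rfl fun i _ => ?_
    ext a b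
    simp [Matrix.vecMulVec_apply, mul_comm]
  -- key inequality from PSD
  have key : 0 ≤ z ⬝ᵥ (Lx *ᵥ z) - θ * (z ⬝ᵥ z) := by
    have h0 := hpsd.dotProduct_mulVec_nonneg z
    have hstar : star z = z := by funext i; simp
    rw [hstar] at h0
    rw [← Matrix.mulVec_mulVec, ← Matrix.mulVec_mulVec, hPz] at h0
    rw [Matrix.dotProduct_mulVec, ← Matrix.mulVec_transpose, hPsymm, hPz] at h0
    rw [Matrix.sub_mulVec, dotProduct_sub, Matrix.smul_mulVec,
      Matrix.one_mulVec, dotProduct_smul] at h0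
    simpa using h0
  -- coordinates
  have huz : ∀ j : Fin m, z ⬝ᵥ u (σ j) = c j := by
    intro j
    rw [hz]
    show (∑ i, c i • u (σ i)) ⬝ᵥ u (σ j) = c j
    rw [dp_sum_left]
    have : ∀ i ∈ Finset.univ, (c i • u (σ i)) ⬝ᵥ u (σ j)
        = if i = j then c i else 0 := by
      intro i _
      rw [smul_dotProduct, hu]
      by_cases hij : i = j
      · simp [hij]
      · have hne : σ i ≠ σ j := fun h => hij (hσinj h)
        simp [hij, hne]
    rw [Finset.sum_congr rfl this]
    simp
  have hzz : z ⬝ᵥ z = ∑ j, c j * c j := by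
    conv_lhs => rw [hz]
    show z ⬝ᵥ (∑ i, c i • u (σ i)) = _
    rw [dp_sum_right]
    refine Finset.sum_congr rfl fun j _ => ?_
    rw [dotProduct_smul, huz j, smul_eq_mul]
  have hLxz : z ⬝ᵥ (Lx *ᵥ z) = ∑ j, hLx.eigenvalues (σ j) * (c j * c j) := by
    have h1 : Lx *ᵥ z = ∑ j, (hLx.eigenvalues (σ j) * c j) • u (σ j) := by
      rw [hz]
      show Lx *ᵥ (∑ i, c i • u (σ i)) = _
      rw [mulVec_sum']
      refine Finset.sum_congr rfl fun j _ => ?_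
      rw [Matrix.mulVec_smul, heigu, smul_smul, mul_comm]
    rw [h1, dp_sum_right]
    refine Finset.sum_congr rfl fun j _ => ?_
    rw [dotProduct_smul, huz j, smul_eq_mul, mul_assoc]
  -- strict inequality
  obtain ⟨j0, hj0⟩ : ∃ j, c j ≠ 0 := by
    by_contra hall
    push_neg at hall
    exact hcne (funext hall)
  have hstrict : ∑ j, hLx.eigenvalues (σ j) * (c j * c j) < θ * (z ⬝ᵥ z) := by
    rw [hzz, Finset.mul_sum]
    refine Finset.sum_lt_sum (fun j _ => ?_) ⟨j0, Finset.mem_univ j0, ?_⟩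
    · have hlt : hLx.eigenvalues (σ j) < θ := (Finset.mem_filter.mp (hσS j)).2
      nlinarith [mul_self_nonneg (c j)]
    · have hlt : hLx.eigenvalues (σ j0) < θ := (Finset.mem_filter.mp (hσS j0)).2
      have hc2 : 0 < c j0 * c j0 := mul_self_pos.mpr hj0
      nlinarith
  rw [hLxz] at key
  linarith
end

section
/- Let v_1,...,v_k and v*_1,...,v*_k each be orthonormal families in R^n, and suppose that for all unit x ∈ span{v_1,...,v_k} one has |x^T(Σ v*_i (v*_i)^T − Σ v_i v_i^T)x| ≤ c. Then for all unit x ∈ span{v_1,...,v_k}^⊥ one has x^T(Σ v*_i (v*_i)^T)x ≤ k·c; equivalently, Σ_{i=1}^k ⟨x, v*_i⟩² ≤ k·c. -/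
open scoped RealInnerProductSpace

/-- Let `v_1,...,v_k` and `v*_1,...,v*_k` each be orthonormal families in `ℝ^n`, and suppose
that for all unit `x ∈ span{v_1,...,v_k}` one has
`|xᵀ(∑ v*_i (v*_i)ᵀ − ∑ v_i v_iᵀ)x| = |∑_i ⟨x, v*_i⟩² − ∑_i ⟨x, v_i⟩²| ≤ c`.  Then for all
unit `x ∈ span{v_1,...,v_k}^⊥` one has `xᵀ(∑ v*_i (v*_i)ᵀ)x = ∑_{i=1}^k ⟨x, v*_i⟩² ≤ k·c`. -/
theorem quadratic_form_bound_on_orthogonal_complement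
    {n k : ℕ}
    (v vstar : Fin k → EuclideanSpace ℝ (Fin n))
    (hv : Orthonormal ℝ v) (hvs : Orthonormal ℝ vstar)
    (c : ℝ) (hc : 0 ≤ c)
    (hyp : ∀ x ∈ Submodule.span ℝ (Set.range v), ‖x‖ = 1 →
        |∑ i, ⟪x, vstar i⟫ ^ 2 - ∑ i, ⟪x, v i⟫ ^ 2| ≤ c) :
    ∀ x : EuclideanSpace ℝ (Fin n), (∀ i, ⟪x, v i⟫ = 0) → ‖x‖ = 1 →
      ∑ i, ⟪x, vstar i⟫ ^ 2 ≤ k * c := by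
  intro x hx hxnorm
  -- the extended orthonormal family
  set w : Fin (k + 1) → EuclideanSpace ℝ (Fin n) := Fin.snoc v x with hw_def
  have hvite := orthonormal_iff_ite.mp hv
  have hw : Orthonormal ℝ w := by
    rw [orthonormal_iff_ite]
    intro i j
    refine Fin.lastCases ?_ ?_ i <;> [skip; intro i'] <;>
      refine Fin.lastCases ?_ ?_ j <;> [skip; intro j'; skip; intro j']
    · simp only [hw_def, Fin.snoc_last, if_pos rfl]
      rw [real_inner_self_eq_norm_sq, hxnorm]; norm_num
    · simp only [hw_def, Fin.snoc_last, Fin.snoc_castSucc]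
      rw [if_neg (by simp [Fin.ext_iff, (Fin.castSucc_lt_last j').ne'])]
      exact hx j'
    · simp only [hw_def, Fin.snoc_last, Fin.snoc_castSucc]
      rw [if_neg (by simp [Fin.ext_iff, (Fin.castSucc_lt_last i').ne]), real_inner_comm]
      exact hx i'
    · simp only [hw_def, Fin.snoc_castSucc]
      rw [hvite i' j']
      simp [Fin.ext_iff]
  -- Bessel's inequality for each vstar i against the family w
  have bessel : ∀ i, ∑ j : Fin k, ⟪v j, vstar i⟫ ^ 2 + ⟪x, vstar i⟫ ^ 2 ≤ 1 := by
    intro i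
    have h := hw.sum_inner_products_le (s := Finset.univ) (vstar i)
    rw [Fin.sum_univ_castSucc] at h
    simp only [hw_def, Fin.snoc_last, Fin.snoc_castSucc, Real.norm_eq_abs, sq_abs] at h
    calc ∑ j : Fin k, ⟪v j, vstar i⟫ ^ 2 + ⟪x, vstar i⟫ ^ 2 ≤ ‖vstar i‖ ^ 2 := h
      _ = 1 := by rw [hvs.1 i]; norm_num
  -- lower bound from the hypothesis at each v j
  have lower : ∀ j : Fin k, 1 - c ≤ ∑ i, ⟪v j, vstar i⟫ ^ 2 := by
    intro j
    have hmem : v j ∈ Submodule.span ℝ (Set.range v) :=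
      Submodule.subset_span ⟨j, rfl⟩
    have hnorm : ‖v j‖ = 1 := hv.1 j
    have h := hyp (v j) hmem hnorm
    have hsum : ∑ i, ⟪v j, v i⟫ ^ 2 = 1 := by
      have : ∀ i, ⟪v j, v i⟫ ^ 2 = if j = i then 1 else 0 := by
        intro i
        rw [real_inner_comm, hvite i j]
        by_cases hji : j = i <;> simp [hji, eq_comm]
      rw [Finset.sum_congr rfl fun i _ => this i]
      simp
    rw [hsum] at h
    have := abs_le.mp h
    linarith [this.1]
  -- combine
  have hsum1 : ∑ i, (∑ j : Fin k, ⟪v j, vstar i⟫ ^ 2 + ⟪x, vstar i⟫ ^ 2) ≤ (k : ℝ) := by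
    calc ∑ i, (∑ j : Fin k, ⟪v j, vstar i⟫ ^ 2 + ⟪x, vstar i⟫ ^ 2)
        ≤ ∑ _i : Fin k, (1 : ℝ) := Finset.sum_le_sum fun i _ => bessel i
      _ = (k : ℝ) := by simp
  have hsum2 : (k : ℝ) * (1 - c) ≤ ∑ j : Fin k, ∑ i, ⟪v j, vstar i⟫ ^ 2 := by
    calc (k : ℝ) * (1 - c) = ∑ _j : Fin k, (1 - c) := by simp [mul_comm]; ring
      _ ≤ ∑ j : Fin k, ∑ i, ⟪v j, vstar i⟫ ^ 2 := Finset.sum_le_sum fun j _ => lower j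
  rw [Finset.sum_add_distrib, Finset.sum_comm] at hsum1
  nlinarith [hsum1, hsum2]
end

section
/- Let (S_i)_{i≥1} and (Ŝ_i)_{i≥1} be set-valued random processes on a d-regular graph G, driven by i.i.d. vertex labels that are 'wrong' with probability at most δ independently per vertex, where Ŝ_i is the set of mislabeled vertices of S_i, and S_{i+1} = N_G(Ŝ_i) ∖ (S_1 ∪ ... ∪ S_i). If each S_{i+1} is determined by the labels outside of itself, then E[|Ŝ_{i+1}|] ≤ δ·d·E[|Ŝ_i|] for every i, and consequently E[Σ_{i≥1} |Ŝ_i|] ≤ |S_1| · Σ_{i≥1}(δd)^i ≤ 2δd·|S_1| whenever δd ≤ 1/2. -/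
open Finset MeasureTheory

/-- The level-set process on a graph `G` driven by a `bad`-label indicator:
`procS G S1 bad i = (S_{i+1}, S_{≤ i+1})` (0-indexed), with `S_1 = S1` and
`S_{i+1} = N_G(Ŝ_i) ∖ (S_1 ∪ ... ∪ S_i)`, where `Ŝ_i` is the set of mislabeled
(`bad`) vertices of `S_i`. -/
def procS {V : Type*} [Fintype V] [DecidableEq V] (G : SimpleGraph V) [DecidableRel G.Adj]
    (S1 : Finset V) (bad : V → Bool) : ℕ → Finset V × Finset V
  | 0 => (S1, S1)
  | i + 1 =>
      let p := procS G S1 bad i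
      let hat := p.1.filter (fun v => bad v = true)
      let next := (hat.biUnion (fun v => G.neighborFinset v)) \ p.2
      (next, p.2 ∪ next)

section Aux

set_option linter.unusedSectionVars false

variable {V : Type*} [Fintype V] [DecidableEq V] (G : SimpleGraph V) [DecidableRel G.Adj]
    (S1 : Finset V)

lemma procS_succ (bad : V → Bool) (i : ℕ) :
    procS G S1 bad (i + 1) =
      (((((procS G S1 bad i).1.filter (fun v => bad v = true)).biUnion
          (fun v => G.neighborFinset v)) \ (procS G S1 bad i).2),
       (procS G S1 bad i).2 ∪ ((((procS G S1 bad i).1.filter (fun v => bad v = true)).biUnion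
          (fun v => G.neighborFinset v)) \ (procS G S1 bad i).2)) := rfl

lemma procS_fst_subset_snd (ω : V → Bool) (i : ℕ) :
    (procS G S1 ω i).1 ⊆ (procS G S1 ω i).2 := by
  cases i with
  | zero => exact subset_rfl
  | succ i => rw [procS_succ]; exact Finset.subset_union_right

lemma procS_snd_subset_succ (ω : V → Bool) (i : ℕ) :
    (procS G S1 ω i).2 ⊆ (procS G S1 ω (i + 1)).2 := by
  rw [procS_succ]; exact Finset.subset_union_left

lemma procS_eq_of_agree (ω ω' : V → Bool) :
    ∀ i, (∀ u ∈ (procS G S1 ω i).2, ω u = ω' u) →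
      procS G S1 ω' i = procS G S1 ω i ∧ procS G S1 ω' (i + 1) = procS G S1 ω (i + 1) := by
  intro i
  induction i with
  | zero =>
    intro h
    refine ⟨rfl, ?_⟩
    rw [procS_succ, procS_succ]
    have : S1.filter (fun v => ω' v = true) = S1.filter (fun v => ω v = true) := by
      apply Finset.filter_congr
      intro u hu
      rw [h u hu]
    show ((((procS G S1 ω' 0).1.filter _).biUnion _) \ _, _) = _
    simp only [procS]
    rw [this]
  | succ i ih =>
    intro h
    have h' : ∀ u ∈ (procS G S1 ω i).2, ω u = ω' u :=
      fun u hu => h u (procS_snd_subset_succ G S1 ω i hu)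
    obtain ⟨-, h1⟩ := ih h'
    refine ⟨h1, ?_⟩
    rw [procS_succ G S1 ω' (i+1), procS_succ G S1 ω (i+1), h1]
    have : (procS G S1 ω (i+1)).1.filter (fun v => ω' v = true)
        = (procS G S1 ω (i+1)).1.filter (fun v => ω v = true) := by
      apply Finset.filter_congr
      intro u hu
      rw [h u (procS_fst_subset_snd G S1 ω (i+1) hu)]
    rw [this]

lemma procS_fst_succ_disjoint (ω : V → Bool) (i : ℕ) (v : V)
    (hv : v ∈ (procS G S1 ω (i + 1)).1) : v ∉ (procS G S1 ω i).2 := by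
  rw [procS_succ] at hv
  exact (Finset.mem_sdiff.mp hv).2

lemma procS_mem_fst_update (v : V) (ω ω' : V → Bool) (hdiff : ∀ u, u ≠ v → ω u = ω' u) (i : ℕ) :
    v ∈ (procS G S1 ω i).1 ↔ v ∈ (procS G S1 ω' i).1 := by
  have key : ∀ (σ σ' : V → Bool), (∀ u, u ≠ v → σ u = σ' u) → ∀ j,
      v ∈ (procS G S1 σ j).1 → v ∈ (procS G S1 σ' j).1 := by
    intro σ σ' hd j hv
    cases j with
    | zero => exact hv
    | succ j =>
      have hnot : v ∉ (procS G S1 σ j).2 := procS_fst_succ_disjoint G S1 σ j v hv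
      have hagree : ∀ u ∈ (procS G S1 σ j).2, σ u = σ' u :=
        fun u hu => hd u (fun h => hnot (h ▸ hu))
      obtain ⟨-, h1⟩ := procS_eq_of_agree G S1 σ σ' j hagree
      rw [h1]
      exact hv
  exact ⟨key ω ω' hdiff i, key ω' ω (fun u hu => (hdiff u hu).symm) i⟩

lemma procS_card_fst_succ_le (d : ℕ) (hreg : ∀ v, G.degree v = d) (ω : V → Bool) (i : ℕ) :
    ((procS G S1 ω (i + 1)).1.card : ℝ)
      ≤ d * ((procS G S1 ω i).1.filter (fun v => ω v = true)).card := by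
  have h1 : (procS G S1 ω (i + 1)).1.card
      ≤ d * ((procS G S1 ω i).1.filter (fun v => ω v = true)).card := by
    calc (procS G S1 ω (i + 1)).1.card
        ≤ (((procS G S1 ω i).1.filter (fun v => ω v = true)).biUnion
            (fun v => G.neighborFinset v)).card := by
          apply Finset.card_le_card
          rw [procS_succ]
          exact Finset.sdiff_subset
      _ ≤ ∑ u ∈ (procS G S1 ω i).1.filter (fun v => ω v = true), (G.neighborFinset u).card :=
          Finset.card_biUnion_le
      _ = ∑ u ∈ (procS G S1 ω i).1.filter (fun v => ω v = true), d := by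
          apply Finset.sum_congr rfl
          intro u _
          rw [SimpleGraph.card_neighborFinset_eq_degree, hreg]
      _ = d * ((procS G S1 ω i).1.filter (fun v => ω v = true)).card := by
          rw [Finset.sum_const, smul_eq_mul, mul_comm]
  exact_mod_cast h1

lemma pi_singleton (ν : V → Measure Bool) [∀ v, IsProbabilityMeasure (ν v)] (ω : V → Bool) :
    Measure.pi ν {ω} = ∏ u, ν u {ω u} := by
  have : ({ω} : Set (V → Bool)) = Set.pi Set.univ (fun u => {ω u}) := by
    ext g
    simp [funext_iff, Set.mem_pi, eq_comm]
  rw [this, Measure.pi_pi]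

lemma bern_true (p : NNReal) (hp1 : p ≤ 1) :
    (PMF.bernoulli p hp1).toMeasure {true} = p := by
  rw [PMF.toMeasure_apply_singleton _ _ (measurableSet_singleton _)]
  rfl

lemma bern_false (p : NNReal) (hp1 : p ≤ 1) :
    (PMF.bernoulli p hp1).toMeasure {false} = 1 - (p : ENNReal) := by
  rw [PMF.toMeasure_apply_singleton _ _ (measurableSet_singleton _)]
  simp [PMF.bernoulli_apply]

lemma bern_sum (p : NNReal) (hp1 : p ≤ 1) :
    ((PMF.bernoulli p hp1).toMeasure {true}).toReal
      + ((PMF.bernoulli p hp1).toMeasure {false}).toReal = 1 := by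
  rw [bern_true, bern_false, ENNReal.toReal_sub_of_le (by exact_mod_cast hp1) ENNReal.one_ne_top]
  rw [ENNReal.toReal_one]
  ring

lemma funSplitAt_symm_self (v : V) (b : Bool) (r : {u : V // u ≠ v} → Bool) :
    ((Equiv.funSplitAt v Bool).symm (b, r)) v = b := by
  simp [Equiv.funSplitAt, Equiv.piSplitAt]

lemma funSplitAt_symm_ne (v : V) (b : Bool) (r : {u : V // u ≠ v} → Bool) (u : V) (h : u ≠ v) :
    ((Equiv.funSplitAt v Bool).symm (b, r)) u = r ⟨u, h⟩ := by
  simp [Equiv.funSplitAt, Equiv.piSplitAt, h]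

lemma funSplitAt_symm_update (v : V) (b b' : Bool) (r : {u : V // u ≠ v} → Bool) :
    (Equiv.funSplitAt v Bool).symm (b, r)
      = Function.update ((Equiv.funSplitAt v Bool).symm (b', r)) v b := by
  funext u
  by_cases h : u = v
  · subst h
    rw [Function.update_self, funSplitAt_symm_self]
  · rw [Function.update_of_ne h, funSplitAt_symm_ne v b r u h, funSplitAt_symm_ne v b' r u h]

lemma sum_split (v : V) (F : (V → Bool) → ℝ) :
    ∑ ω, F ω = ∑ r : {u : V // u ≠ v} → Bool,
      (F ((Equiv.funSplitAt v Bool).symm (true, r))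
        + F ((Equiv.funSplitAt v Bool).symm (false, r))) := by
  rw [← Equiv.sum_comp (Equiv.funSplitAt v Bool).symm F, Fintype.sum_prod_type,
    Fintype.sum_bool]
  exact Finset.sum_add_distrib.symm

lemma key_indep (p : V → ENNReal) (hp1 : ∀ v, p v ≤ 1) (v : V) (g : (V → Bool) → ℝ)
    (hg : ∀ ω b, g (Function.update ω v b) = g ω) :
    ∫ ω, g ω * (if ω v = true then (1:ℝ) else 0)
        ∂(Measure.pi fun u => (PMF.bernoulli (p u).toNNReal (by simpa using ENNReal.toNNReal_mono ENNReal.one_ne_top (hp1 u))).toMeasure)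
      = (p v).toReal
        * ∫ ω, g ω ∂(Measure.pi fun u => (PMF.bernoulli (p u).toNNReal (by simpa using ENNReal.toNNReal_mono ENNReal.one_ne_top (hp1 u))).toMeasure) := by
  set ν : V → Measure Bool := fun u => (PMF.bernoulli (p u).toNNReal (by simpa using ENNReal.toNNReal_mono ENNReal.one_ne_top (hp1 u))).toMeasure with hν
  set μ := Measure.pi ν with hμ
  rw [integral_fintype .of_finite, integral_fintype .of_finite]
  simp only [smul_eq_mul, measureReal_def]
  rw [sum_split v, sum_split v (fun ω => (μ {ω}).toReal * g ω), Finset.mul_sum]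
  apply Finset.sum_congr rfl
  intro r _
  set ωT := (Equiv.funSplitAt v Bool).symm (true, r) with hωT
  set ωF := (Equiv.funSplitAt v Bool).symm (false, r) with hωF
  have hT : ωT v = true := funSplitAt_symm_self v true r
  have hF : ωF v = false := funSplitAt_symm_self v false r
  have hgTF : g ωT = g ωF := by
    rw [hωT, funSplitAt_symm_update v true false r, ← hωF, hg]
  set M : ℝ := ∏ u ∈ Finset.univ.erase v, ((ν u) {ωF u}).toReal with hM
  have hprod : ∀ b, ((μ {(Equiv.funSplitAt v Bool).symm (b, r)}).toReal)
      = ((ν v) {b}).toReal * M := by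
    intro b
    rw [hμ, pi_singleton, ENNReal.toReal_prod,
      ← Finset.mul_prod_erase Finset.univ
        (fun u => ((ν u) {((Equiv.funSplitAt v Bool).symm (b, r)) u}).toReal) (Finset.mem_univ v)]
    congr 1
    · rw [funSplitAt_symm_self]
    · apply Finset.prod_congr rfl
      intro u hu
      have h : u ≠ v := (Finset.mem_erase.mp hu).1
      rw [funSplitAt_symm_ne v b r u h, hωF, funSplitAt_symm_ne v false r u h]
  have hmT : (μ {ωT}).toReal = ((ν v) {true}).toReal * M := hprod true
  have hmF : (μ {ωF}).toReal = ((ν v) {false}).toReal * M := hprod false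
  have hsum : ((ν v) {true}).toReal + ((ν v) {false}).toReal = 1 := bern_sum (p v).toNNReal _
  have hvt : ((ν v) {true}).toReal = (p v).toReal := by rw [hν]; exact (congrArg ENNReal.toReal (bern_true _ _)).trans (by simp [ENNReal.coe_toNNReal_eq_toReal])
  rw [hT, hF, hmT, hmF, hgTF]
  norm_num
  rw [hvt] at hsum ⊢
  linear_combination (-((p v).toReal * M * g ωF)) * hsum

lemma card_filter_real (S : Finset V) (q : V → Bool) :
    ((S.filter (fun v => q v = true)).card : ℝ)
      = ∑ v, (if v ∈ S then (1:ℝ) else 0) * (if q v = true then 1 else 0) := by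
  have h : S.filter (fun v => q v = true)
      = Finset.univ.filter (fun v => v ∈ S ∧ q v = true) := by
    ext v; simp
  rw [h, Finset.card_filter]
  push_cast
  apply Finset.sum_congr rfl
  intro v _
  by_cases h1 : v ∈ S <;> by_cases h2 : q v = true <;> simp [h1, h2]

lemma card_real (S : Finset V) :
    ((S.card : ℝ)) = ∑ v, (if v ∈ S then (1:ℝ) else 0) := by
  rw [Finset.sum_ite_mem, Finset.univ_inter, Finset.sum_const]
  simp

end Aux
/-- Let `(S_i)` and `(Ŝ_i)` be the set-valued processes on a `d`-regular graph `G` driven by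
independent vertex labels that are wrong with probability at most `δ` per vertex (here the
mislabel indicators `ω : V → Bool` follow a product of Bernoulli measures with parameters
`p v ≤ δ`): `Ŝ_i` is the set of mislabeled vertices of `S_i` and
`S_{i+1} = N_G(Ŝ_i) ∖ (S_1 ∪ ... ∪ S_i)` (each `S_{i+1}` is determined by the labels outside
of itself).  Then `E[|Ŝ_{i+1}|] ≤ δ·d·E[|Ŝ_i|]` for every `i`, and consequently
`E[∑_{i≥1} |Ŝ_i|] ≤ 2δd·|S_1|` whenever `δd ≤ 1/2`. -/
theorem galton_watson_level_sets
    {V : Type*} [Fintype V] [DecidableEq V]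
    (G : SimpleGraph V) [DecidableRel G.Adj]
    (d : ℕ) (hd : 1 ≤ d) (hreg : ∀ v, G.degree v = d)
    (δ : ℝ) (hδ0 : 0 ≤ δ)
    (p : V → ENNReal) (hp1 : ∀ v, p v ≤ 1) (hpδ : ∀ v, p v ≤ ENNReal.ofReal δ)
    (S1 : Finset V) :
    let μ : Measure (V → Bool) :=
      MeasureTheory.Measure.pi (fun v => (PMF.bernoulli (p v).toNNReal
        (by simpa using ENNReal.toNNReal_mono ENNReal.one_ne_top (hp1 v))).toMeasure)
    let hatCard : ℕ → (V → Bool) → ℝ := fun i ω =>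
      (((procS G S1 ω i).1.filter (fun v => ω v = true)).card : ℝ)
    (∀ i : ℕ, (∫ ω, hatCard (i + 1) ω ∂μ) ≤ δ * d * ∫ ω, hatCard i ω ∂μ)
    ∧ (δ * d ≤ 1 / 2 → ∀ m : ℕ,
        (∫ ω, (∑ i ∈ Finset.range m, hatCard i ω) ∂μ) ≤ 2 * (δ * d) * S1.card) := by
  intro μ hatCard
  haveI hprob : IsProbabilityMeasure μ :=
    inferInstanceAs (IsProbabilityMeasure
      (Measure.pi (fun v => (PMF.bernoulli (p v).toNNReal
        (by simpa using ENNReal.toNNReal_mono ENNReal.one_ne_top (hp1 v))).toMeasure)))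
  have hpvδ : ∀ v, (p v).toReal ≤ δ := by
    intro v
    calc (p v).toReal ≤ (ENNReal.ofReal δ).toReal :=
          ENNReal.toReal_mono ENNReal.ofReal_ne_top (hpδ v)
      _ = δ := ENNReal.toReal_ofReal hδ0
  -- the key one-step expectation bound
  have key_step : ∀ i : ℕ,
      (∫ ω, hatCard i ω ∂μ) ≤ δ * ∫ ω, ((procS G S1 ω i).1.card : ℝ) ∂μ := by
    intro i
    have hrep : ∀ ω : V → Bool, hatCard i ω
        = ∑ v, (if v ∈ (procS G S1 ω i).1 then (1:ℝ) else 0)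
            * (if ω v = true then (1:ℝ) else 0) := by
      intro ω
      simp only [hatCard]
      exact card_filter_real _ _
    have hrep2 : ∀ ω : V → Bool, ((procS G S1 ω i).1.card : ℝ)
        = ∑ v, (if v ∈ (procS G S1 ω i).1 then (1:ℝ) else 0) :=
      fun ω => card_real _
    have hnn : ∀ v : V, (0:ℝ)
        ≤ ∫ ω, (if v ∈ (procS G S1 ω i).1 then (1:ℝ) else 0) ∂μ := by
      intro v
      apply integral_nonneg
      intro ω
      positivity
    calc (∫ ω, hatCard i ω ∂μ)
        = ∑ v, ∫ ω, (if v ∈ (procS G S1 ω i).1 then (1:ℝ) else 0)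
            * (if ω v = true then (1:ℝ) else 0) ∂μ := by
          simp only [hrep]
          exact integral_finset_sum _ (fun v _ => .of_finite)
      _ = ∑ v, (p v).toReal
            * ∫ ω, (if v ∈ (procS G S1 ω i).1 then (1:ℝ) else 0) ∂μ := by
          apply Finset.sum_congr rfl
          intro v _
          apply key_indep p hp1 v
          intro ω b
          have hdiff : ∀ u, u ≠ v → Function.update ω v b u = ω u :=
            fun u hu => Function.update_of_ne hu b ω
          have := procS_mem_fst_update G S1 v (Function.update ω v b) ω hdiff i
          exact if_congr this rfl rfl
      _ ≤ ∑ v, δ * ∫ ω, (if v ∈ (procS G S1 ω i).1 then (1:ℝ) else 0) ∂μ := by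
          apply Finset.sum_le_sum
          intro v _
          exact mul_le_mul_of_nonneg_right (hpvδ v) (hnn v)
      _ = δ * ∫ ω, ((procS G S1 ω i).1.card : ℝ) ∂μ := by
          rw [← Finset.mul_sum]
          congr 1
          rw [← integral_finset_sum _ (fun v _ => .of_finite)]
          simp only [hrep2]
  have hnncard : ∀ i : ℕ, (0:ℝ) ≤ ∫ ω, hatCard i ω ∂μ := by
    intro i
    apply integral_nonneg
    intro ω
    simp only [hatCard]
    positivity
  have part1 : ∀ i : ℕ,
      (∫ ω, hatCard (i + 1) ω ∂μ) ≤ δ * d * ∫ ω, hatCard i ω ∂μ := by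
    intro i
    calc (∫ ω, hatCard (i + 1) ω ∂μ)
        ≤ δ * ∫ ω, ((procS G S1 ω (i + 1)).1.card : ℝ) ∂μ := key_step (i + 1)
      _ ≤ δ * (d * ∫ ω, hatCard i ω ∂μ) := by
          apply mul_le_mul_of_nonneg_left _ hδ0
          calc (∫ ω, ((procS G S1 ω (i + 1)).1.card : ℝ) ∂μ)
              ≤ ∫ ω, (d : ℝ) * hatCard i ω ∂μ := by
                apply integral_mono .of_finite .of_finite
                intro ω
                exact procS_card_fst_succ_le G S1 d hreg ω i
            _ = (d : ℝ) * ∫ ω, hatCard i ω ∂μ := integral_const_mul _ _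
      _ = δ * d * ∫ ω, hatCard i ω ∂μ := by ring
  refine ⟨part1, ?_⟩
  intro hhalf m
  have hδd0 : (0:ℝ) ≤ δ * d := mul_nonneg hδ0 (Nat.cast_nonneg d)
  have hS1nn : (0:ℝ) ≤ (S1.card : ℝ) := Nat.cast_nonneg _
  have a0 : (∫ ω, hatCard 0 ω ∂μ) ≤ δ * S1.card := by
    calc (∫ ω, hatCard 0 ω ∂μ)
        ≤ δ * ∫ ω, ((procS G S1 ω 0).1.card : ℝ) ∂μ := key_step 0
      _ = δ * S1.card := by
          congr 1
          have : (fun ω : V → Bool => ((procS G S1 ω 0).1.card : ℝ))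
              = fun _ => (S1.card : ℝ) := rfl
          rw [this, integral_const, probReal_univ]
          simp
  have bound : ∀ i : ℕ, (∫ ω, hatCard i ω ∂μ) ≤ δ * S1.card * (δ * d) ^ i := by
    intro i
    induction i with
    | zero => simpa using a0
    | succ i ih =>
      calc (∫ ω, hatCard (i + 1) ω ∂μ)
          ≤ δ * d * ∫ ω, hatCard i ω ∂μ := part1 i
        _ ≤ δ * d * (δ * S1.card * (δ * d) ^ i) := mul_le_mul_of_nonneg_left ih hδd0
        _ = δ * S1.card * (δ * d) ^ (i + 1) := by ring
  rw [integral_finset_sum _ (fun i _ => .of_finite)]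
  have hgeom : (∑ i ∈ Finset.range m, (δ * d) ^ i) ≤ 2 := by
    calc (∑ i ∈ Finset.range m, (δ * d) ^ i)
        ≤ ∑ i ∈ Finset.range m, (1 / (2:ℝ)) ^ i := by
          apply Finset.sum_le_sum
          intro i _
          exact pow_le_pow_left₀ hδd0 hhalf i
      _ ≤ 2 := sum_geometric_two_le m
  have hd1 : (1:ℝ) ≤ (d : ℝ) := by exact_mod_cast hd
  calc (∑ i ∈ Finset.range m, ∫ ω, hatCard i ω ∂μ)
      ≤ ∑ i ∈ Finset.range m, δ * S1.card * (δ * d) ^ i :=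
        Finset.sum_le_sum (fun i _ => bound i)
    _ = δ * S1.card * ∑ i ∈ Finset.range m, (δ * d) ^ i := by rw [Finset.mul_sum]
    _ ≤ δ * S1.card * 2 :=
        mul_le_mul_of_nonneg_left hgeom (mul_nonneg hδ0 hS1nn)
    _ ≤ 2 * (δ * d) * S1.card := by nlinarith [mul_nonneg hδ0 hS1nn]
end
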